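/- arXiv:math-ph/0601020 — 2 statements merged into one kernel-verified Lean document; each statement's English description precedes it below -/
import Mathlib

section
/- For any n ∈ ℤ, any field F of characteristic 0, any ε ∈ F with ε² = 1, and any choice of elements a_k ∈ F (k ∈ ℤ, |k − n| ≥ 2) and a_+, a_− ∈ F, setting a_{n−1} := 1, a_{n+1} := −1 and ǎ_k := 1 − a_k², the first vector field of the self-dual Toeplitz lattice admits a formal Laurent solution x(t) over F in which only x_n(t) has a pole (a simple one), with expansions: x_k(t) = ε(a_k + ǎ_k(a_{k+1} − a_{k−1})t + (1/2)ǎ_k(a_{k−2}ǎ_{k−1} + a_{k+2}ǎ_{k+1} − a_k((a_{k+1} − a_{k−1})² + 2 − 2a_{k−1}a_{k+1}) + κ_k)t² + O(t³)) for |k − n| ≥ 2, where κ_k = 0 for |k − n| > 2 and κ_{n±2} = ∓4a_±; x_{n±1}(t) = ε(∓1 + 4a_± t + 4a_±(2a_{n±2} ∓ (a_− + a_+))t² + O(t³)); and x_n(t) = −(ε/(2t))(1 + (a_+ − a_−)t + (1/3)((a_+ − a_−)² + 4(a_+a_{n+2} − a_−a_{n−2} + 1 − 2a_+a_−))t² +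 O(t³)). Moreover all higher coefficients of the solution are uniquely determined by the data ε, (a_k)_{|k−n|≥2}, a_+, a_−. -/
/-!
Common definitions: the matrices `L₁`, `L₂` of the Toeplitz lattice, their powers,
the recursion polynomials `Γ_k` (here `GamA`), `Γ̃_k` (here `GamB`) and their
self-dual version (`GamSD`), together with the notion of formal Laurent
solutions of the (self-dual) Toeplitz lattice.
-/

noncomputable section

namespace SingConf

variable {A : Type*} [CommRing A]

/-- The entry `(L₁)_{ij} = -x_i y_{j-1} + δ_{i+1,j}` (for `j - i ≤ 1`, zero otherwise). -/
def L1e (x y : ℤ → A) (i j : ℤ) : A :=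
  if j ≤ i + 1 then -(x i * y (j - 1)) + (if i + 1 = j then 1 else 0) else 0

/-- The entry `(L₂)_{ij} = -y_j x_{i-1} + δ_{j+1,i}` (for `j - i ≥ -1`, zero otherwise). -/
def L2e (x y : ℤ → A) (i j : ℤ) : A :=
  if i ≤ j + 1 then -(y j * x (i - 1)) + (if j + 1 = i then 1 else 0) else 0

/-- The entry `(L₁^s)_{ij}`; the matrix `L₁` has upper bandwidth 1, so each entry of a
power is a finite sum. -/
def L1pow (x y : ℤ → A) : ℕ → ℤ → ℤ → A
  | 0 => fun i j => if i = j then 1 else 0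
  | s + 1 => fun i j => ∑ l ∈ Finset.Icc (j - 1) (i + (s : ℤ)), L1pow x y s i l * L1e x y l j

/-- The entry `(L₂^s)_{ij}`. -/
def L2pow (x y : ℤ → A) : ℕ → ℤ → ℤ → A
  | 0 => fun i j => if i = j then 1 else 0
  | s + 1 => fun i j => ∑ l ∈ Finset.Icc (i - (s : ℤ)) (j + 1), L2pow x y s i l * L2e x y l j

/-- The recursion polynomial
`Γ_k(x,y;u) = (v_k/y_k)(-(L₁P₁'(L₁))_{k+1,k+1} - (L₂P₂'(L₂))_{k,k}
              + (P₁'(L₁))_{k+1,k} + (P₂'(L₂))_{k,k+1}) + k x_k`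
where `P₁(λ) = ∑_{i=1}^N u_i λ^i/i`, `P₂(λ) = ∑_{i=1}^N u_{-i} λ^i/i`, `v_k = 1 - x_k y_k`.
The apparent denominator `y_k` cancels, thanks to the identities
`(L₁^{i-1})_{k+1,k} - (L₁^i)_{k+1,k+1} = y_k ∑_{l} x_l (L₁^{i-1})_{k+1,l}` and
`(L₂^{i-1})_{k,k+1} - (L₂^i)_{k,k} = y_k ∑_{l} x_{l-1} (L₂^{i-1})_{k,l}`,
which is how the cancellation-free expression below is obtained. -/
def GamA (N : ℕ) (u : ℤ → A) (x y : ℤ → A) (k : ℤ) : A :=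
  (1 - x k * y k) *
    ((∑ i ∈ Finset.Icc 1 N, u (i : ℤ) *
        ∑ l ∈ Finset.Icc k (k + (i : ℤ)), x l * L1pow x y (i - 1) (k + 1) l) +
      ∑ i ∈ Finset.Icc 1 N, u (-(i : ℤ)) *
        ∑ l ∈ Finset.Icc (k - (i : ℤ) + 1) (k + 1), x (l - 1) * L2pow x y (i - 1) k l) +
  (k : A) * x k

/-- The recursion polynomial
`Γ̃_k(x,y;u) = (v_k/x_k)(-(L₁P₁'(L₁))_{k,k} - (L₂P₂'(L₂))_{k+1,k+1}
              + (P₁'(L₁))_{k+1,k} + (P₂'(L₂))_{k,k+1}) + k y_k`,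
written in cancellation-free form using
`(L₁^{i-1})_{k+1,k} - (L₁^i)_{k,k} = x_k ∑_{l} y_{l-1} (L₁^{i-1})_{l,k}` and
`(L₂^{i-1})_{k,k+1} - (L₂^i)_{k+1,k+1} = x_k ∑_{l} y_l (L₂^{i-1})_{l,k+1}`. -/
def GamB (N : ℕ) (u : ℤ → A) (x y : ℤ → A) (k : ℤ) : A :=
  (1 - x k * y k) *
    ((∑ i ∈ Finset.Icc 1 N, u (i : ℤ) *
        ∑ l ∈ Finset.Icc (k - (i : ℤ) + 1) (k + 1), y (l - 1) * L1pow x y (i - 1) l k) +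
      ∑ i ∈ Finset.Icc 1 N, u (-(i : ℤ)) *
        ∑ l ∈ Finset.Icc k (k + (i : ℤ)), y l * L2pow x y (i - 1) l (k + 1)) +
  (k : A) * y k

/-- The self-dual recursion polynomial
`Γ_k(x;u) = (v_k/x_k)(2(P'(L))_{k+1,k} - (LP'(L))_{k+1,k+1} - (LP'(L))_{k,k}) + k x_k`
(where `L = L₁` with `y = x`, `v_k = 1 - x_k²`), in cancellation-free form. -/
def GamSD (N : ℕ) (u : ℕ → A) (x : ℤ → A) (k : ℤ) : A :=
  (1 - x k * x k) *
    (∑ i ∈ Finset.Icc 1 N, u i *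
      ((∑ l ∈ Finset.Icc k (k + (i : ℤ)), x l * L1pow x x (i - 1) (k + 1) l) +
        ∑ l ∈ Finset.Icc (k - (i : ℤ) + 1) (k + 1), x (l - 1) * L1pow x x (i - 1) l k)) +
  (k : A) * x k

variable {K : Type*} [Field K]

/-- `f(t) = O(t^m)` for a formal Laurent series. -/
def BigO (f : LaurentSeries K) (m : ℤ) : Prop := ∀ i < m, f.coeff i = 0

/-- A family `x(t) = (x_k(t))_{k ∈ ℤ}` of formal Laurent series is a solution of the first
vector field of the self-dual Toeplitz lattice: `dx_k/dt = (1 - x_k²)(x_{k+1} - x_{k-1})`;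
stated coefficientwise (the coefficient of `t^m` in `dx_k/dt` is `(m+1)·x_k^{(m+1)}`). -/
def IsSolSD (x : ℤ → LaurentSeries K) : Prop :=
  ∀ k m : ℤ, ((m + 1 : ℤ) : K) * (x k).coeff (m + 1) =
    ((1 - x k * x k) * (x (k + 1) - x (k - 1))).coeff m

/-- A family `(x_k(t), y_k(t))_{k ∈ ℤ}` of formal Laurent series is a solution of the first
Toeplitz vector field: `dx_k/dt = (1 - x_k y_k)(x_{k+1} - x_{k-1})`,
`dy_k/dt = (1 - x_k y_k)(y_{k+1} - y_{k-1})`. -/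
def IsSolT (x y : ℤ → LaurentSeries K) : Prop :=
  ∀ k m : ℤ,
    ((m + 1 : ℤ) : K) * (x k).coeff (m + 1) =
      ((1 - x k * y k) * (x (k + 1) - x (k - 1))).coeff m ∧
    ((m + 1 : ℤ) : K) * (y k).coeff (m + 1) =
      ((1 - x k * y k) * (y (k + 1) - y (k - 1))).coeff m

end SingConf

/-
Write `x_k = P_k` for `k ≠ n` and `x_n = t⁻¹ P_n` with power series `P_k`. After multiplying by
suitable powers of `t`, the lattice becomes four kinds of power series equations (generic sites,
the sites `n ± 1`, and the site `n`). In degree `M` they determine the `M`-th coefficients from the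
lower ones, with factor `M` at generic sites, `M - 1` at `n ± 1` (because `P_{n±1}(0)² = 1` and
`2 P_{n±1}(0) P_n(0) = 1`) and `M + 1` at `n`, where the `M`-th coefficients at `n ± 1` enter as
well. The only resonance is `M = 1` at `n ± 1`, where the free parameters `4 ε a_±` are placed.
Hence the coefficients of a normalized solution are exactly the fixed points of a causal recursion,
which exist and are unique; the displayed expansions are read off from the equations in degrees
at most two.
-/

open PowerSeries LaurentSeries
open HahnSeries (single single_mul_single ofPowerSeries_injective coeff_single_mul_add)

section CausalRecursion

variable {α : Type*}

def IsCausal (step : (ℕ → α) → ℕ → α) : Prop :=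
  ∀ d d' M, (∀ j < M, d j = d' j) → step d M = step d' M

variable {step : (ℕ → α) → ℕ → α}

theorem IsCausal.eq_of_forall_eq_step (h : IsCausal step) {d d' : ℕ → α}
    (hd : ∀ M, d M = step d M) (hd' : ∀ M, d' M = step d' M) : d = d' := by
  funext M
  induction M using Nat.strong_induction_on with
  | _ M ih => rw [hd, hd']; exact h d d' M ih

theorem IsCausal.exists_forall_eq_step [Nonempty α] (h : IsCausal step) :
    ∃ d, ∀ M, d M = step d M := by
  let d : ℕ → α := Nat.strongRec fun M rec =>
    step (fun j => if hj : j < M then rec j hj else Classical.arbitrary α) M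
  exact ⟨d, fun M => (Nat.strongRec_eq _ M).trans (h _ _ M fun j hj => dif_pos hj)⟩

end CausalRecursion

namespace PowerSeries

variable {R : Type*} [CommRing R] {M : ℕ} {f f' g g' : R⟦X⟧}

theorem X_pow_dvd_sub_iff_mk_eq :
    X ^ M ∣ f - g ↔ Ideal.Quotient.mk (Ideal.span {X ^ M}) f = Ideal.Quotient.mk _ g := by
  rw [Ideal.Quotient.eq, Ideal.mem_span_singleton]

theorem X_pow_dvd_sub_trunc (M : ℕ) (f : R⟦X⟧) : X ^ M ∣ f - (trunc M f : R⟦X⟧) :=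
  ⟨_, sub_eq_of_eq_add (eq_X_pow_mul_shift_add_trunc M f)⟩

@[simp] theorem mk_span_X_pow_trunc (M : ℕ) (f : R⟦X⟧) :
    Ideal.Quotient.mk (Ideal.span {X ^ M}) (trunc M f : R⟦X⟧) = Ideal.Quotient.mk _ f :=
  (X_pow_dvd_sub_iff_mk_eq.1 (X_pow_dvd_sub_trunc M f)).symm

theorem coeff_eq_of_X_pow_dvd_sub {m : ℕ} (hm : m < M) (h : X ^ M ∣ f - g) :
    coeff m f = coeff m g := by
  rw [← sub_eq_zero, ← map_sub]
  exact X_pow_dvd_iff.1 h m hm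

theorem coeff_mul_of_X_pow_dvd_sub (hM : 1 ≤ M) (hf : X ^ M ∣ f - f') (hg : X ^ M ∣ g - g') :
    coeff M (f * g) = coeff M (f' * g') + coeff M (f - f') * constantCoeff g
      + constantCoeff f * coeff M (g - g') := by
  obtain ⟨u, hu⟩ := hf
  obtain ⟨v, hv⟩ := hg
  have hf0 : constantCoeff f = constantCoeff f' := by
    simpa using coeff_eq_of_X_pow_dvd_sub hM ⟨u, hu⟩
  rw [show f * g = f' * g' + X ^ M * (u * g + f' * v) by linear_combination g * hu + f' * hv,
    hu, hv, map_add]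
  simp [coeff_X_pow_mul', hf0]
  ring

theorem coeff_sub_trunc (M : ℕ) (f : R⟦X⟧) :
    coeff M (f - (trunc M f : R⟦X⟧)) = coeff M f := by
  simp [coeff_trunc]

theorem coeff_sq_sub_coeff_trunc_sq (hM : 1 ≤ M) (f : R⟦X⟧) :
    coeff M (f ^ 2) - coeff M ((trunc M f : R⟦X⟧) ^ 2) = 2 * constantCoeff f * coeff M f := by
  rw [sq, sq, coeff_mul_of_X_pow_dvd_sub hM (X_pow_dvd_sub_trunc M f) (X_pow_dvd_sub_trunc M f),
    coeff_sub_trunc]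
  ring

theorem coeff_two_mul (f g : R⟦X⟧) :
    coeff 2 (f * g) = constantCoeff f * coeff 2 g + coeff 1 f * coeff 1 g
      + coeff 2 f * constantCoeff g := by
  simp [coeff_mul, Finset.Nat.antidiagonal_succ]
  ring

theorem derivative_eq_one_sub_sq_mul_iff (P Q S : R⟦X⟧) :
    d⁄dX R P = (1 - P ^ 2) * (Q - S) ↔
      ∀ m : ℕ, coeff (m + 1) P * (m + 1) = coeff m ((1 - (trunc (m + 1) P : R⟦X⟧) ^ 2) *
        ((trunc (m + 1) Q : R⟦X⟧) - (trunc (m + 1) S : R⟦X⟧))) := by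
  refine PowerSeries.ext_iff.trans (forall_congr' fun m => ?_)
  rw [coeff_derivative]
  congr! 1
  exact coeff_eq_of_X_pow_dvd_sub (Nat.lt_succ_self m) (X_pow_dvd_sub_iff_mk_eq.2 (by simp))

theorem X_mul_derivative_eq_one_sub_sq_mul_iff (P Q S : R⟦X⟧) (hP : constantCoeff P ^ 2 = 1)
    (hPS : 2 * constantCoeff P * constantCoeff S = 1) :
    X * d⁄dX R P = (1 - P ^ 2) * (X * Q - S) ↔
      ∀ M, 2 ≤ M → coeff M P * (M - 1) = coeff M ((1 - (trunc M P : R⟦X⟧) ^ 2) *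
        (X * (trunc M Q : R⟦X⟧) - (trunc M S : R⟦X⟧))) := by
  have top : ∀ M, 1 ≤ M → coeff M ((1 - P ^ 2) * (X * Q - S)) =
      coeff M ((1 - (trunc M P : R⟦X⟧) ^ 2) *
        (X * (trunc M Q : R⟦X⟧) - (trunc M S : R⟦X⟧))) + coeff M P := by
    intro M hM
    rw [coeff_mul_of_X_pow_dvd_sub hM (f' := 1 - (trunc M P : R⟦X⟧) ^ 2)
      (g' := X * (trunc M Q : R⟦X⟧) - (trunc M S : R⟦X⟧))
      (X_pow_dvd_sub_iff_mk_eq.2 (by simp)) (X_pow_dvd_sub_iff_mk_eq.2 (by simp))]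
    have := coeff_sq_sub_coeff_trunc_sq hM P
    simp only [map_sub, map_mul, map_pow, map_one, constantCoeff_X, hP, zero_mul, zero_sub,
      sub_self]
    linear_combination constantCoeff S * this + coeff M P * hPS
  have hlow : (1 - (trunc 1 P : R⟦X⟧) ^ 2) = 0 := by
    rw [trunc_one_left, Polynomial.coe_C, ← map_pow, coeff_zero_eq_constantCoeff_apply, hP,
      map_one, sub_self]
  constructor
  · intro h M hM
    have := congrArg (coeff M) h
    rw [top M (by omega)] at this
    obtain ⟨M, rfl⟩ : ∃ k, M = k + 1 := ⟨M - 1, by omega⟩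
    rw [coeff_succ_X_mul, coeff_derivative] at this
    push_cast
    linear_combination this
  · intro h
    ext M
    rcases M with _ | _ | M
    · simp [hP]
    · rw [top 1 le_rfl, hlow]
      simp [coeff_derivative]
    · rw [top _ (by omega), coeff_succ_X_mul, coeff_derivative, ← h _ (by omega)]
      push_cast
      ring

theorem X_mul_derivative_sub_eq_X_sq_sub_sq_mul_iff (P Q : R⟦X⟧)
    (hPQ : constantCoeff P * constantCoeff Q = 1) :
    X * d⁄dX R P - P = (X ^ 2 - P ^ 2) * Q ↔
      ∀ M, 1 ≤ M → coeff M P * (M + 1) =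
        coeff M ((X ^ 2 - (trunc M P : R⟦X⟧) ^ 2) * (trunc M Q : R⟦X⟧))
          - constantCoeff P ^ 2 * coeff M Q := by
  have top : ∀ M, 1 ≤ M → coeff M ((X ^ 2 - P ^ 2) * Q) =
      coeff M ((X ^ 2 - (trunc M P : R⟦X⟧) ^ 2) * (trunc M Q : R⟦X⟧))
        - 2 * coeff M P - constantCoeff P ^ 2 * coeff M Q := by
    intro M hM
    rw [coeff_mul_of_X_pow_dvd_sub hM (f' := X ^ 2 - (trunc M P : R⟦X⟧) ^ 2)
      (X_pow_dvd_sub_iff_mk_eq.2 (by simp)) (X_pow_dvd_sub_trunc M Q), coeff_sub_trunc]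
    have := coeff_sq_sub_coeff_trunc_sq hM P
    simp only [map_sub, map_pow, constantCoeff_X]
    linear_combination (-constantCoeff Q) * this - 2 * coeff M P * hPQ
  constructor
  · intro h M hM
    have := congrArg (coeff M) h
    rw [top M hM] at this
    obtain ⟨M, rfl⟩ : ∃ k, M = k + 1 := ⟨M - 1, by omega⟩
    rw [map_sub, coeff_succ_X_mul, coeff_derivative] at this
    push_cast
    linear_combination this
  · intro h
    ext M
    rcases M with _ | M
    · simp only [map_sub, map_mul, coeff_zero_eq_constantCoeff_apply, map_pow, constantCoeff_X]
      linear_combination constantCoeff P * hPQ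
    · rw [map_sub, top _ (by omega), coeff_succ_X_mul, coeff_derivative]
      linear_combination (norm := (push_cast; ring)) h (M + 1) (by omega)

theorem coeff_coe_X_mul_X_mul_derivative_sub (y : R⟦X⟧) (j : ℤ) :
    ((X * (X * d⁄dX R y - y) : R⟦X⟧) : R⸨X⸩).coeff j =
      (j - 2) * (y : R⸨X⸩).coeff (j - 1) := by
  rw [PowerSeries.coeff_coe, PowerSeries.coeff_coe]
  rcases lt_or_ge j 0 with hj | hj
  · simp [hj, show j - 1 < 0 by omega]
  lift j to ℕ using hj
  rcases j with _ | _ | j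
  · simp
  · simp
    ring
  · rw [if_neg (by omega), if_neg (by omega), Int.natAbs_natCast,
      show ((j + 1 + 1 : ℕ) : ℤ) - 1 = ((j + 1 : ℕ) : ℤ) by push_cast; ring,
      Int.natAbs_natCast, coeff_succ_X_mul, map_sub, coeff_succ_X_mul, coeff_derivative]
    push_cast
    ring

end PowerSeries

theorem LaurentSeries.coeff_single_neg_one_mul {R : Type*} [Semiring R] (f : R⸨X⸩) (m : ℤ) :
    (single (-1) (1 : R) * f).coeff m = f.coeff (m + 1) := by
  simpa using coeff_single_mul_add (r := (1 : R)) (x := f) (a := m + 1) (b := -1)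

namespace SingConf

theorem ne_of_two_le_abs_sub {k n : ℤ} (h : 2 ≤ |k - n|) : k ≠ n := by
  rintro rfl
  simp at h

variable {F : Type*} [Field F]

theorem isSolSD_iff (y : ℤ → F⟦X⟧) :
    IsSolSD (fun k => single (-1) 1 * (y k : F⸨X⸩)) ↔
      ∀ k, X * (X * d⁄dX F (y k) - y k) = (X ^ 2 - y k ^ 2) * (y (k + 1) - y (k - 1)) := by
  have hTX : single (-1) (1 : F) * ((X : F⟦X⟧) : F⸨X⸩) = 1 := by
    rw [PowerSeries.coe_X, single_mul_single]
    simp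
  have hrhs : ∀ k, (1 - single (-1) 1 * (y k : F⸨X⸩) * (single (-1) 1 * (y k : F⸨X⸩))) *
      (single (-1) 1 * (y (k + 1) : F⸨X⸩) - single (-1) 1 * (y (k - 1) : F⸨X⸩)) =
      single (-1) 1 * (single (-1) 1 * (single (-1) 1 *
        (((X ^ 2 - y k ^ 2) * (y (k + 1) - y (k - 1)) : F⟦X⟧) : F⸨X⸩))) := by
    intro k
    push_cast
    linear_combination (-(single (-1) 1 * ((y (k + 1) : F⸨X⸩) - y (k - 1)))
      * (1 + single (-1) 1 * ((X : F⟦X⟧) : F⸨X⸩))) * hTX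
  refine forall_congr' fun k => ?_
  rw [← (ofPowerSeries_injective (Γ := ℤ)).eq_iff, HahnSeries.ext_iff, funext_iff]
  simp only [hrhs, coeff_single_neg_one_mul, coeff_coe_X_mul_X_mul_derivative_sub]
  constructor
  · intro h j
    have := h (j - 3)
    simp only [show j - 3 + 1 + 1 = j - 1 by ring, show j - 1 + 1 = j by ring] at this
    rw [← this]
    push_cast
    ring
  · intro h m
    rw [← h]
    push_cast
    ring_nf

def SiteEqs (n : ℤ) (P : ℤ → F⟦X⟧) : Prop :=
  (∀ k, k ≠ n - 1 → k ≠ n → k ≠ n + 1 →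
    d⁄dX F (P k) = (1 - P k ^ 2) * (P (k + 1) - P (k - 1))) ∧
  X * d⁄dX F (P (n + 1)) = (1 - P (n + 1) ^ 2) * (X * P (n + 2) - P n) ∧
  X * d⁄dX F (P (n - 1)) = (1 - P (n - 1) ^ 2) * (P n - X * P (n - 2)) ∧
  X * d⁄dX F (P n) - P n = (X ^ 2 - P n ^ 2) * (P (n + 1) - P (n - 1))

def tMul (n : ℤ) (P : ℤ → F⟦X⟧) (k : ℤ) : F⟦X⟧ := if k = n then P n else X * P k

def laurentFamily (n : ℤ) (P : ℤ → F⟦X⟧) (k : ℤ) : F⸨X⸩ :=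
  single (-1) 1 * (tMul n P k : F⸨X⸩)

theorem eq_iff_of_eq_X_pow_mul {A B C D : F⟦X⟧} (j : ℕ) (hA : A = X ^ j * C)
    (hB : B = X ^ j * D) : A = B ↔ C = D := by
  rw [hA, hB, mul_right_inj' (pow_ne_zero j X_ne_zero)]

theorem siteEqs_iff (n : ℤ) (P : ℤ → F⟦X⟧) :
    (∀ k, X * (X * d⁄dX F (tMul n P k) - tMul n P k) =
      (X ^ 2 - tMul n P k ^ 2) * (tMul n P (k + 1) - tMul n P (k - 1))) ↔ SiteEqs n P := by
  have outer : ∀ k, k ≠ n → tMul n P k = X * P k := fun k hk => if_neg hk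
  have self : tMul n P n = P n := if_pos rfl
  have hX : ∀ f : F⟦X⟧, d⁄dX F (X * f) = f + X * d⁄dX F f := fun f => by
    simp [Derivation.leibniz]
    ring
  have generic : ∀ k, k ≠ n - 1 → k ≠ n → k ≠ n + 1 →
      (X * (X * d⁄dX F (tMul n P k) - tMul n P k) =
        (X ^ 2 - tMul n P k ^ 2) * (tMul n P (k + 1) - tMul n P (k - 1)) ↔
      d⁄dX F (P k) = (1 - P k ^ 2) * (P (k + 1) - P (k - 1))) := by
    intro k h1 h2 h3
    rw [outer k h2, outer (k + 1) (by omega), outer (k - 1) (by omega)]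
    exact eq_iff_of_eq_X_pow_mul 3 (by rw [hX]; ring) (by ring)
  have right : (X * (X * d⁄dX F (tMul n P (n + 1)) - tMul n P (n + 1)) =
      (X ^ 2 - tMul n P (n + 1) ^ 2) * (tMul n P (n + 1 + 1) - tMul n P (n + 1 - 1)) ↔
      X * d⁄dX F (P (n + 1)) = (1 - P (n + 1) ^ 2) * (X * P (n + 2) - P n)) := by
    rw [outer (n + 1) (by omega), add_sub_cancel_right, self, outer _ (by omega),
      show n + 1 + 1 = n + 2 by ring]
    exact eq_iff_of_eq_X_pow_mul 2 (by rw [hX]; ring) (by ring)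
  have left : (X * (X * d⁄dX F (tMul n P (n - 1)) - tMul n P (n - 1)) =
      (X ^ 2 - tMul n P (n - 1) ^ 2) * (tMul n P (n - 1 + 1) - tMul n P (n - 1 - 1)) ↔
      X * d⁄dX F (P (n - 1)) = (1 - P (n - 1) ^ 2) * (P n - X * P (n - 2))) := by
    rw [outer (n - 1) (by omega), sub_add_cancel, self, outer _ (by omega),
      show n - 1 - 1 = n - 2 by ring]
    exact eq_iff_of_eq_X_pow_mul 2 (by rw [hX]; ring) (by ring)
  have center : (X * (X * d⁄dX F (tMul n P n) - tMul n P n) =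
      (X ^ 2 - tMul n P n ^ 2) * (tMul n P (n + 1) - tMul n P (n - 1)) ↔
      X * d⁄dX F (P n) - P n = (X ^ 2 - P n ^ 2) * (P (n + 1) - P (n - 1))) := by
    rw [outer (n + 1) (by omega), outer (n - 1) (by omega), self]
    exact eq_iff_of_eq_X_pow_mul 1 (by ring) (by ring)
  constructor
  · intro h
    exact ⟨fun k h1 h2 h3 => (generic k h1 h2 h3).1 (h k), right.1 (h _), left.1 (h _),
      center.1 (h n)⟩
  · rintro ⟨hG, hR, hL, hC⟩ k
    by_cases h2 : k = n
    · subst h2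
      exact center.2 hC
    by_cases h1 : k = n - 1
    · subst h1
      exact left.2 hL
    by_cases h3 : k = n + 1
    · subst h3
      exact right.2 hR
    exact (generic k h1 h2 h3).2 (hG k h1 h2 h3)

theorem isSolSD_laurentFamily_iff (n : ℤ) (P : ℤ → F⟦X⟧) :
    IsSolSD (laurentFamily n P) ↔ SiteEqs n P :=
  (isSolSD_iff (tMul n P)).trans (siteEqs_iff n P)

def series (d : ℕ → ℤ → F) (k : ℤ) : F⟦X⟧ := PowerSeries.mk fun j => d j k

@[simp] theorem coeff_series (d : ℕ → ℤ → F) (j : ℕ) (k : ℤ) :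
    coeff j (series d k) = d j k :=
  coeff_mk _ _

@[simp] theorem constantCoeff_series (d : ℕ → ℤ → F) (k : ℤ) :
    constantCoeff (series d k) = d 0 k := by
  simp [← coeff_zero_eq_constantCoeff_apply]

def truncFamily (d : ℕ → ℤ → F) (M : ℕ) (k : ℤ) : F⟦X⟧ := trunc M (series d k)

section Recursion

variable (n : ℤ) (ε : F) (a : ℤ → F) (ap am : F)

def initialCoeff (k : ℤ) : F := if k = n then -(ε / 2) else ε * a k

def HasInitialData (P : ℤ → F⟦X⟧) : Prop :=
  (∀ k, constantCoeff (P k) = initialCoeff n ε a k) ∧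
    coeff 1 (P (n + 1)) = 4 * ε * ap ∧ coeff 1 (P (n - 1)) = 4 * ε * am

/-- The coefficient of `t ^ M` at a site `k ≠ n` forced by `SiteEqs`, given the truncations `p`
below order `M`; order `1` at `n ± 1` is resonant and carries the free parameters. -/
def outerCoeff (p : ℤ → F⟦X⟧) (M : ℕ) (k : ℤ) : F :=
  if k = n + 1 then
    if M = 1 then 4 * ε * ap
    else ((M : F) - 1)⁻¹ * coeff M ((1 - p k ^ 2) * (X * p (n + 2) - p n))
  else if k = n - 1 then
    if M = 1 then 4 * ε * am
    else -(((M : F) - 1)⁻¹ * coeff M ((1 - p k ^ 2) * (X * p (n - 2) - p n)))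
  else (M : F)⁻¹ * coeff (M - 1) ((1 - p k ^ 2) * (p (k + 1) - p (k - 1)))

def nextCoeff (p : ℤ → F⟦X⟧) (M : ℕ) (k : ℤ) : F :=
  if k = n then
    ((M : F) + 1)⁻¹ * (coeff M ((X ^ 2 - p n ^ 2) * (p (n + 1) - p (n - 1)))
      - (outerCoeff n ε ap am p M (n + 1) - outerCoeff n ε ap am p M (n - 1)) / 4)
  else outerCoeff n ε ap am p M k

def step (d : ℕ → ℤ → F) (M : ℕ) : ℤ → F :=
  if M = 0 then initialCoeff n ε a
  else nextCoeff n ε ap am (truncFamily d M) M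

theorem step_isCausal : IsCausal (step n ε a ap am) := by
  intro d d' M h
  have htrunc : truncFamily d M = truncFamily d' M := funext fun k => by
    ext j
    simp only [truncFamily, Polynomial.coeff_coe, coeff_trunc, coeff_series]
    split_ifs with hj
    · rw [h j hj]
    · rfl
  simp only [step, htrunc]

variable {n ε a ap am} {d : ℕ → ℤ → F}

theorem initial_values (han1 : a (n - 1) = 1) (han2 : a (n + 1) = -1)
    (h0 : ∀ k, d 0 k = initialCoeff n ε a k) :
    d 0 n = -(ε / 2) ∧ d 0 (n + 1) = -ε ∧ d 0 (n - 1) = ε := by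
  simp [h0, initialCoeff, han1, han2]

variable [CharZero F]

theorem derivative_series_eq_iff {k : ℤ} (h1 : k ≠ n - 1) (h3 : k ≠ n + 1) :
    d⁄dX F (series d k) = (1 - series d k ^ 2) * (series d (k + 1) - series d (k - 1)) ↔
      ∀ M, 1 ≤ M → d M k = outerCoeff n ε ap am (truncFamily d M) M k := by
  simp only [derivative_eq_one_sub_sq_mul_iff, coeff_series, outerCoeff, truncFamily, if_neg h3,
    if_neg h1]
  constructor
  · intro h M hM
    obtain ⟨m, rfl⟩ : ∃ m, M = m + 1 := ⟨M - 1, by omega⟩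
    rw [eq_inv_mul_iff_mul_eq₀ (Nat.cast_ne_zero.2 (by omega)), mul_comm, Nat.add_sub_cancel,
      ← h m]
    push_cast
    rfl
  · intro h m
    rw [h (m + 1) (by omega), Nat.add_sub_cancel]
    push_cast
    field_simp

theorem X_mul_derivative_series_right_iff (hε : ε ^ 2 = 1) (h0 : d 0 (n + 1) = -ε)
    (h0n : d 0 n = -(ε / 2)) :
    X * d⁄dX F (series d (n + 1)) =
        (1 - series d (n + 1) ^ 2) * (X * series d (n + 2) - series d n)
      ∧ d 1 (n + 1) = 4 * ε * ap ↔
      ∀ M, 1 ≤ M → d M (n + 1) = outerCoeff n ε ap am (truncFamily d M) M (n + 1) := by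
  rw [X_mul_derivative_eq_one_sub_sq_mul_iff _ _ _ (by simp [h0, hε])
    (by simp [h0, h0n]; linear_combination hε)]
  simp only [coeff_series, outerCoeff, truncFamily, ↓reduceIte]
  constructor
  · rintro ⟨h, h1⟩ M hM
    split_ifs with hM1
    · rwa [hM1]
    · rw [eq_inv_mul_iff_mul_eq₀ (sub_ne_zero.2 (Nat.cast_ne_one.2 hM1)), mul_comm,
        h M (by omega)]
  · intro h
    refine ⟨fun M hM => ?_, by simpa using h 1 le_rfl⟩
    rw [h M (by omega), if_neg (by omega)]
    field_simp [sub_ne_zero.2 (Nat.cast_ne_one.2 (show M ≠ 1 by omega))]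

theorem X_mul_derivative_series_left_iff (hε : ε ^ 2 = 1) (h0 : d 0 (n - 1) = ε)
    (h0n : d 0 n = -(ε / 2)) :
    X * d⁄dX F (series d (n - 1)) =
        (1 - series d (n - 1) ^ 2) * (series d n - X * series d (n - 2))
      ∧ d 1 (n - 1) = 4 * ε * am ↔
      ∀ M, 1 ≤ M → d M (n - 1) = outerCoeff n ε ap am (truncFamily d M) M (n - 1) := by
  -- the equation at `n - 1` is the one at `n + 1` for `-P_{n-1}`
  have hneg : X * d⁄dX F (series d (n - 1)) =
      (1 - series d (n - 1) ^ 2) * (series d n - X * series d (n - 2)) ↔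
      X * d⁄dX F (-series d (n - 1)) =
        (1 - (-series d (n - 1)) ^ 2) * (X * series d (n - 2) - series d n) := by
    rw [map_neg, neg_sq]
    constructor <;> intro h <;> linear_combination -h
  rw [hneg, X_mul_derivative_eq_one_sub_sq_mul_iff _ _ _ (by simp [h0, hε])
    (by simp [h0, h0n]; linear_combination hε)]
  simp only [map_neg, coeff_series, outerCoeff, truncFamily, if_neg (show n - 1 ≠ n + 1 by omega),
    ↓reduceIte, Polynomial.coe_neg, neg_sq]
  constructor
  · rintro ⟨h, h1⟩ M hM
    split_ifs with hM1
    · rwa [hM1]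
    · rw [← h M (by omega)]
      field_simp [sub_ne_zero.2 (Nat.cast_ne_one.2 hM1)]
  · intro h
    refine ⟨fun M hM => ?_, by simpa using h 1 le_rfl⟩
    rw [h M (by omega), if_neg (by omega)]
    field_simp [sub_ne_zero.2 (Nat.cast_ne_one.2 (show M ≠ 1 by omega))]

theorem X_mul_derivative_series_sub_iff (hε : ε ^ 2 = 1) (h0n : d 0 n = -(ε / 2))
    (h0p : d 0 (n + 1) = -ε) (h0m : d 0 (n - 1) = ε)
    (hp : ∀ M, 1 ≤ M →
      d M (n + 1) = outerCoeff n ε ap am (truncFamily d M) M (n + 1))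
    (hm : ∀ M, 1 ≤ M →
      d M (n - 1) = outerCoeff n ε ap am (truncFamily d M) M (n - 1)) :
    X * d⁄dX F (series d n) - series d n =
        (X ^ 2 - series d n ^ 2) * (series d (n + 1) - series d (n - 1)) ↔
      ∀ M, 1 ≤ M → d M n = nextCoeff n ε ap am (truncFamily d M) M n := by
  rw [X_mul_derivative_sub_eq_X_sq_sub_sq_mul_iff _ _
    (by simp [h0n, h0p, h0m]; linear_combination hε)]
  simp only [map_sub, Polynomial.coe_sub, coeff_series, constantCoeff_series, nextCoeff,
    truncFamily, ↓reduceIte]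
  refine forall₂_congr fun M hM => ?_
  rw [hp M hM, hm M hM, h0n, show (-(ε / 2)) ^ 2 = 1 / 4 by linear_combination hε / 4,
    eq_inv_mul_iff_mul_eq₀ (Nat.cast_add_one_ne_zero M), mul_comm]
  constructor <;> intro h <;> linear_combination h

theorem siteEqs_of_forall_eq_step (hε : ε ^ 2 = 1) (han1 : a (n - 1) = 1)
    (han2 : a (n + 1) = -1) (hd : ∀ M, d M = step n ε a ap am d M) :
    SiteEqs n (series d) ∧ HasInitialData n ε a ap am (series d) := by
  have h0 : ∀ k, d 0 k = initialCoeff n ε a k := by simpa [step, funext_iff] using hd 0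
  obtain ⟨h0n, h0p, h0m⟩ := initial_values han1 han2 h0
  have hnext : ∀ M, 1 ≤ M → ∀ k, d M k = nextCoeff n ε ap am (truncFamily d M) M k :=
    fun M hM k => by rw [hd M, step, if_neg (by omega)]
  have hp : ∀ M, 1 ≤ M → d M (n + 1) = outerCoeff n ε ap am (truncFamily d M) M (n + 1) :=
    fun M hM => by rw [hnext M hM, nextCoeff, if_neg (by omega)]
  have hm : ∀ M, 1 ≤ M → d M (n - 1) = outerCoeff n ε ap am (truncFamily d M) M (n - 1) :=
    fun M hM => by rw [hnext M hM, nextCoeff, if_neg (by omega)]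
  obtain ⟨hR, h1p⟩ := (X_mul_derivative_series_right_iff hε h0p h0n).2 hp
  obtain ⟨hL, h1m⟩ := (X_mul_derivative_series_left_iff hε h0m h0n).2 hm
  refine ⟨⟨fun k h1 h2 h3 =>
    (derivative_series_eq_iff (ε := ε) (ap := ap) (am := am) h1 h3).2 fun M hM => ?_, hR, hL,
    (X_mul_derivative_series_sub_iff hε h0n h0p h0m hp hm).2 fun M hM => hnext M hM n⟩,
    by simpa using h0, by simpa using h1p, by simpa using h1m⟩
  rw [hnext M hM, nextCoeff, if_neg h2]

theorem forall_eq_step_of_siteEqs (hε : ε ^ 2 = 1) (han1 : a (n - 1) = 1)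
    (han2 : a (n + 1) = -1) (hP : SiteEqs n (series d))
    (hinit : HasInitialData n ε a ap am (series d)) : ∀ M, d M = step n ε a ap am d M := by
  obtain ⟨hG, hR, hL, hC⟩ := hP
  obtain ⟨h0, h1p, h1m⟩ := hinit
  simp only [constantCoeff_series, coeff_series] at h0 h1p h1m
  obtain ⟨h0n, h0p, h0m⟩ := initial_values han1 han2 h0
  have hp := (X_mul_derivative_series_right_iff (am := am) hε h0p h0n).1 ⟨hR, h1p⟩
  have hm := (X_mul_derivative_series_left_iff (ap := ap) hε h0m h0n).1 ⟨hL, h1m⟩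
  have hn := (X_mul_derivative_series_sub_iff hε h0n h0p h0m hp hm).1 hC
  intro M
  funext k
  rcases Nat.eq_zero_or_pos M with rfl | hM
  · simp [step, h0]
  rw [step, if_neg (by omega)]
  by_cases h2 : k = n
  · subst h2
    exact hn M hM
  rw [nextCoeff, if_neg h2]
  by_cases h1 : k = n - 1
  · subst h1
    exact hm M hM
  by_cases h3 : k = n + 1
  · subst h3
    exact hp M hM
  exact (derivative_series_eq_iff h1 h3).1 (hG k h1 h2 h3) M hM

theorem eq_series_of_forall_eq_step (hε : ε ^ 2 = 1) (han1 : a (n - 1) = 1)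
    (han2 : a (n + 1) = -1) (hd : ∀ M, d M = step n ε a ap am d M) {P : ℤ → F⟦X⟧}
    (hP : SiteEqs n P) (h0 : HasInitialData n ε a ap am P) : P = series d := by
  have hP' : series (fun j k => coeff j (P k)) = P := funext fun k => by ext j; simp
  rw [← hP'] at hP h0 ⊢
  rw [(step_isCausal n ε a ap am).eq_of_forall_eq_step
    (forall_eq_step_of_siteEqs hε han1 han2 hP h0) hd]

end Recursion

section Values

variable {n : ℤ} {ε : F} {a : ℤ → F} {ap am : F} {P : ℤ → F⟦X⟧}

theorem HasInitialData.constantCoeff_self (h0 : HasInitialData n ε a ap am P) :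
    constantCoeff (P n) = -(ε / 2) := by
  rw [h0.1, initialCoeff, if_pos rfl]

theorem HasInitialData.constantCoeff_of_ne (h0 : HasInitialData n ε a ap am P) {j : ℤ}
    (hj : j ≠ n) : constantCoeff (P j) = ε * a j := by
  rw [h0.1, initialCoeff, if_neg hj]

theorem coeff_one_of_ne (hε : ε ^ 2 = 1) (han1 : a (n - 1) = 1) (han2 : a (n + 1) = -1)
    (hP : SiteEqs n P) (h0 : HasInitialData n ε a ap am P) {k : ℤ} (hk : k ≠ n) :
    coeff 1 (P k) = ε * ((1 - a k ^ 2) * (a (k + 1) - a (k - 1)))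
      + if k = n + 1 then 4 * ε * ap else if k = n - 1 then 4 * ε * am else 0 := by
  by_cases hp : k = n + 1
  · subst hp
    simp [han2, h0.2.1]
  by_cases hm : k = n - 1
  · subst hm
    simp [han1, h0.2.2, show n - 1 ≠ n + 1 by omega]
  have := congrArg (coeff 0) (hP.1 k hm hk hp)
  simp only [coeff_derivative, coeff_zero_eq_constantCoeff_apply, map_mul, map_sub, map_one,
    map_pow, h0.constantCoeff_of_ne hk, h0.constantCoeff_of_ne (show k + 1 ≠ n by omega),
    h0.constantCoeff_of_ne (show k - 1 ≠ n by omega)] at this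
  rw [if_neg hp, if_neg hm]
  obtain rfl | rfl := sq_eq_one_iff.1 hε <;> linear_combination this

variable [CharZero F]

theorem coeff_one_center (hε : ε ^ 2 = 1) (han1 : a (n - 1) = 1) (han2 : a (n + 1) = -1)
    (hP : SiteEqs n P) (h0 : HasInitialData n ε a ap am P) :
    coeff 1 (P n) = -(ε / 2) * (ap - am) := by
  have := congrArg (coeff 1) hP.2.2.2
  simp [coeff_one_mul, sq, coeff_derivative, h0.constantCoeff_self,
    h0.constantCoeff_of_ne (show n + 1 ≠ n by omega),
    h0.constantCoeff_of_ne (show n - 1 ≠ n by omega), han1, han2, h0.2.1, h0.2.2] at this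
  obtain rfl | rfl := sq_eq_one_iff.1 hε <;> linear_combination this / 2

theorem coeff_two_right (hε : ε ^ 2 = 1) (han1 : a (n - 1) = 1) (han2 : a (n + 1) = -1)
    (hP : SiteEqs n P) (h0 : HasInitialData n ε a ap am P) :
    coeff 2 (P (n + 1)) = ε * (4 * ap * (2 * a (n + 2) - (am + ap))) := by
  have := congrArg (coeff 2) hP.2.1
  simp [coeff_two_mul, coeff_one_mul, sq, coeff_derivative, h0.constantCoeff_self,
    h0.constantCoeff_of_ne (show n + 1 ≠ n by omega),
    h0.constantCoeff_of_ne (show n + 2 ≠ n by omega), han2, h0.2.1,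
    coeff_one_center hε han1 han2 hP h0] at this
  obtain rfl | rfl := sq_eq_one_iff.1 hε <;> linear_combination this

theorem coeff_two_left (hε : ε ^ 2 = 1) (han1 : a (n - 1) = 1) (han2 : a (n + 1) = -1)
    (hP : SiteEqs n P) (h0 : HasInitialData n ε a ap am P) :
    coeff 2 (P (n - 1)) = ε * (4 * am * (2 * a (n - 2) + (am + ap))) := by
  have := congrArg (coeff 2) hP.2.2.1
  simp [coeff_two_mul, coeff_one_mul, sq, coeff_derivative, h0.constantCoeff_self,
    h0.constantCoeff_of_ne (show n - 1 ≠ n by omega),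
    h0.constantCoeff_of_ne (show n - 2 ≠ n by omega), han1, h0.2.2,
    coeff_one_center hε han1 han2 hP h0] at this
  obtain rfl | rfl := sq_eq_one_iff.1 hε <;> linear_combination this

theorem coeff_two_center (hε : ε ^ 2 = 1) (han1 : a (n - 1) = 1) (han2 : a (n + 1) = -1)
    (hP : SiteEqs n P) (h0 : HasInitialData n ε a ap am P) :
    coeff 2 (P n) = -(ε / 2) * ((1 / 3) * ((ap - am) ^ 2 +
      4 * (ap * a (n + 2) - am * a (n - 2) + 1 - 2 * ap * am))) := by
  have := congrArg (coeff 2) hP.2.2.2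
  simp [coeff_two_mul, coeff_one_mul, sq, coeff_derivative, h0.constantCoeff_self,
    h0.constantCoeff_of_ne (show n + 1 ≠ n by omega),
    h0.constantCoeff_of_ne (show n - 1 ≠ n by omega), han1, han2, h0.2.1, h0.2.2,
    coeff_one_center hε han1 han2 hP h0, coeff_two_right hε han1 han2 hP h0,
    coeff_two_left hε han1 han2 hP h0] at this
  obtain rfl | rfl := sq_eq_one_iff.1 hε <;> linear_combination this / 3

theorem coeff_two_of_two_le_abs (hε : ε ^ 2 = 1) (han1 : a (n - 1) = 1) (han2 : a (n + 1) = -1)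
    (hP : SiteEqs n P) (h0 : HasInitialData n ε a ap am P) {k : ℤ} (hk : 2 ≤ |k - n|) :
    coeff 2 (P k) = ε * ((1 / 2) * (1 - a k ^ 2) *
      (a (k - 2) * (1 - a (k - 1) ^ 2) + a (k + 2) * (1 - a (k + 1) ^ 2)
        - a k * ((a (k + 1) - a (k - 1)) ^ 2 + 2 - 2 * a (k - 1) * a (k + 1))
        + (if k = n + 2 then -(4 * ap) else if k = n - 2 then 4 * am else 0))) := by
  have hk' : k ≤ n - 2 ∨ n + 2 ≤ k := by rcases le_abs'.1 hk with h | h <;> omega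
  have := congrArg (coeff 1) (hP.1 k (by omega) (by omega) (by omega))
  simp only [coeff_derivative, coeff_one_mul, map_sub, map_one, sq, map_mul, coeff_one,
    h0.constantCoeff_of_ne (show k ≠ n by omega),
    h0.constantCoeff_of_ne (show k + 1 ≠ n by omega),
    h0.constantCoeff_of_ne (show k - 1 ≠ n by omega),
    coeff_one_of_ne hε han1 han2 hP h0 (show k ≠ n by omega),
    coeff_one_of_ne hε han1 han2 hP h0 (show k + 1 ≠ n by omega),
    coeff_one_of_ne hε han1 han2 hP h0 (show k - 1 ≠ n by omega)] at this
  rw [show k + 1 + 1 = k + 2 by ring, show k + 1 - 1 = k by ring, show k - 1 + 1 = k by ring,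
    show k - 1 - 1 = k - 2 by ring] at this
  -- the `if`s (`κ_{n±2}`) come from the free coefficients `4 ε a_±` at the neighbours `n ± 1`
  obtain rfl | rfl := sq_eq_one_iff.1 hε <;> split_ifs at this ⊢ <;>
    first | (exfalso; omega) | linear_combination this / 2

end Values

section Normalization

variable {n : ℤ} {ε : F} {a : ℤ → F} {ap am : F} {P : ℤ → F⟦X⟧}

theorem coeff_laurentFamily_of_ne {k : ℤ} (hk : k ≠ n) (m : ℤ) :
    (laurentFamily n P k).coeff m = (P k : F⸨X⸩).coeff m := by
  rw [laurentFamily, tMul, if_neg hk, PowerSeries.coe_mul, PowerSeries.coe_X, ← mul_assoc,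
    single_mul_single]
  simp

theorem coeff_laurentFamily_self (m : ℤ) :
    (laurentFamily n P n).coeff m = (P n : F⸨X⸩).coeff (m + 1) := by
  rw [laurentFamily, coeff_single_neg_one_mul, tMul, if_pos rfl]

def IsNormalized (n : ℤ) (ε : F) (a : ℤ → F) (ap am : F) (x : ℤ → F⸨X⸩) : Prop :=
  (∀ k, k ≠ n → BigO (x k) 0) ∧ BigO (x n) (-1) ∧ (x n).coeff (-1) = -ε / 2 ∧
    (x (n + 1)).coeff 0 = -ε ∧ (x (n - 1)).coeff 0 = ε ∧
    (x (n + 1)).coeff 1 = 4 * ε * ap ∧ (x (n - 1)).coeff 1 = 4 * ε * am ∧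
    (∀ k, 2 ≤ |k - n| → (x k).coeff 0 = ε * a k)

theorem isNormalized_laurentFamily (han1 : a (n - 1) = 1) (han2 : a (n + 1) = -1)
    (h0 : HasInitialData n ε a ap am P) : IsNormalized n ε a ap am (laurentFamily n P) := by
  obtain ⟨h0, h1p, h1m⟩ := h0
  refine ⟨fun k hk i hi => ?_, fun i hi => ?_, ?_, ?_, ?_, ?_, ?_, fun k hk => ?_⟩
  · rw [coeff_laurentFamily_of_ne hk, PowerSeries.coeff_coe, if_pos hi]
  · rw [coeff_laurentFamily_self, PowerSeries.coeff_coe, if_pos (by omega)]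
  · simp [coeff_laurentFamily_self, PowerSeries.coeff_coe, h0, initialCoeff, neg_div]
  · simp [coeff_laurentFamily_of_ne, PowerSeries.coeff_coe, h0, initialCoeff, han2]
  · simp [coeff_laurentFamily_of_ne, PowerSeries.coeff_coe, h0, initialCoeff, han1]
  · simp [coeff_laurentFamily_of_ne, PowerSeries.coeff_coe, h1p]
  · simp [coeff_laurentFamily_of_ne, PowerSeries.coeff_coe, h1m]
  · simp [coeff_laurentFamily_of_ne (ne_of_two_le_abs_sub hk), PowerSeries.coeff_coe, h0,
      initialCoeff, ne_of_two_le_abs_sub hk]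

theorem exists_eq_laurentFamily (han1 : a (n - 1) = 1) (han2 : a (n + 1) = -1)
    {x : ℤ → F⸨X⸩} (hx : IsNormalized n ε a ap am x) :
    ∃ P, x = laurentFamily n P ∧ HasInitialData n ε a ap am P := by
  obtain ⟨hO, hOn, hm1, h0p, h0m, h1p, h1m, h0⟩ := hx
  have hx : x = laurentFamily n fun k =>
      PowerSeries.mk fun j => (x k).coeff (j - if k = n then 1 else 0) := by
    funext k
    ext m
    by_cases hk : k = n
    · subst hk
      rw [coeff_laurentFamily_self, PowerSeries.coeff_coe, coeff_mk, if_pos rfl]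
      split_ifs with hm
      · exact hOn m (by omega)
      · congr 1
        omega
    · rw [coeff_laurentFamily_of_ne hk, PowerSeries.coeff_coe, coeff_mk, if_neg hk]
      split_ifs with hm
      · exact hO k hk m hm
      · congr 1
        omega
  refine ⟨_, hx, fun k => ?_, by simpa using h1p, by simpa using h1m⟩
  simp only [← coeff_zero_eq_constantCoeff_apply, coeff_mk, initialCoeff, Nat.cast_zero, zero_sub]
  by_cases hn : k = n
  · simp [hn, hm1, neg_div]
  by_cases hp : k = n + 1
  · simp [hp, h0p, han2]
  by_cases hm : k = n - 1
  · simp [hm, h0m, han1]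
  simpa [hn] using h0 k (le_abs.2 (by omega))

end Normalization

end SingConf

open SingConf

/-- For any `n ∈ ℤ`, any field `F` of characteristic `0`, any `ε ∈ F` with
`ε² = 1`, and any choice of elements `a_k ∈ F` (`|k - n| ≥ 2`, encoded as a function
`a : ℤ → F` with the conventions `a_{n-1} = 1`, `a_{n+1} = -1`; the value `a n` is never
used) and `a₊, a₋ ∈ F`, the first vector field of the self-dual Toeplitz lattice admits a
formal Laurent solution `x(t)` in which only `x_n(t)` has a (simple) pole, with the stated
expansions up to `O(t³)`; all higher coefficients are uniquely determined by the data. -/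
theorem statement2 (F : Type*) [Field F] [CharZero F] (n : ℤ) (ε : F) (hε : ε ^ 2 = 1)
    (a : ℤ → F) (han1 : a (n - 1) = 1) (han2 : a (n + 1) = -1) (ap am : F) :
    ∃ x : ℤ → LaurentSeries F,
      -- the data characterizing the solution:
      (IsSolSD x ∧
        (∀ k, k ≠ n → BigO (x k) 0) ∧
        BigO (x n) (-1) ∧ (x n).coeff (-1) = -ε / 2 ∧
        (x (n + 1)).coeff 0 = -ε ∧ (x (n - 1)).coeff 0 = ε ∧
        (x (n + 1)).coeff 1 = 4 * ε * ap ∧ (x (n - 1)).coeff 1 = 4 * ε * am ∧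
        (∀ k, 2 ≤ |k - n| → (x k).coeff 0 = ε * a k)) ∧
      -- the further displayed coefficients of the expansions:
      ((∀ k, 2 ≤ |k - n| →
          (x k).coeff 1 = ε * ((1 - a k ^ 2) * (a (k + 1) - a (k - 1))) ∧
          (x k).coeff 2 = ε * ((1 / 2) * (1 - a k ^ 2) *
            (a (k - 2) * (1 - a (k - 1) ^ 2) + a (k + 2) * (1 - a (k + 1) ^ 2)
              - a k * ((a (k + 1) - a (k - 1)) ^ 2 + 2 - 2 * a (k - 1) * a (k + 1))
              + (if k = n + 2 then -(4 * ap) else if k = n - 2 then 4 * am else 0)))) ∧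
        (x (n + 1)).coeff 2 = ε * (4 * ap * (2 * a (n + 2) - (am + ap))) ∧
        (x (n - 1)).coeff 2 = ε * (4 * am * (2 * a (n - 2) + (am + ap))) ∧
        (x n).coeff 0 = -(ε / 2) * (ap - am) ∧
        (x n).coeff 1 = -(ε / 2) * ((1 / 3) * ((ap - am) ^ 2 +
          4 * (ap * a (n + 2) - am * a (n - 2) + 1 - 2 * ap * am)))) ∧
      -- uniqueness: any formal Laurent solution with the same characterizing data coincides
      -- with `x`:
      (∀ x' : ℤ → LaurentSeries F,
        (IsSolSD x' ∧
          (∀ k, k ≠ n → BigO (x' k) 0) ∧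
          BigO (x' n) (-1) ∧ (x' n).coeff (-1) = -ε / 2 ∧
          (x' (n + 1)).coeff 0 = -ε ∧ (x' (n - 1)).coeff 0 = ε ∧
          (x' (n + 1)).coeff 1 = 4 * ε * ap ∧ (x' (n - 1)).coeff 1 = 4 * ε * am ∧
          (∀ k, 2 ≤ |k - n| → (x' k).coeff 0 = ε * a k)) → x' = x) := by
  obtain ⟨d, hd⟩ := (step_isCausal n ε a ap am).exists_forall_eq_step
  obtain ⟨hP, h0⟩ := siteEqs_of_forall_eq_step hε han1 han2 hd
  refine ⟨laurentFamily n (series d), ⟨(isSolSD_laurentFamily_iff n _).2 hP,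
    isNormalized_laurentFamily han1 han2 h0⟩, ⟨fun k hk => ⟨?_, ?_⟩, ?_, ?_, ?_, ?_⟩,
    fun x' ⟨hsol, hx'⟩ => ?_⟩
  · have : k ≠ n + 1 ∧ k ≠ n - 1 := by rcases le_abs'.1 hk with h | h <;> omega
    simpa [coeff_laurentFamily_of_ne (ne_of_two_le_abs_sub hk), PowerSeries.coeff_coe, this]
      using coeff_one_of_ne hε han1 han2 hP h0 (ne_of_two_le_abs_sub hk)
  · simpa [coeff_laurentFamily_of_ne (ne_of_two_le_abs_sub hk), PowerSeries.coeff_coe]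
      using coeff_two_of_two_le_abs hε han1 han2 hP h0 hk
  · simpa [coeff_laurentFamily_of_ne, PowerSeries.coeff_coe]
      using coeff_two_right hε han1 han2 hP h0
  · simpa [coeff_laurentFamily_of_ne, PowerSeries.coeff_coe]
      using coeff_two_left hε han1 han2 hP h0
  · simpa [coeff_laurentFamily_self, PowerSeries.coeff_coe]
      using coeff_one_center hε han1 han2 hP h0
  · simpa [coeff_laurentFamily_self, PowerSeries.coeff_coe]
      using coeff_two_center hε han1 han2 hP h0
  · obtain ⟨P, rfl, h0'⟩ := exists_eq_laurentFamily han1 han2 hx'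
    rw [eq_series_of_forall_eq_step hε han1 han2 hd ((isSolSD_laurentFamily_iff n P).1 hsol) h0']
end
end

section
/- Let R be a commutative ring, regard the entries of powers of L_1 as elements of the polynomial ring over R in the variables x_i, y_i (i ∈ ℤ), and set v_i := 1 − x_i y_i. For all k ∈ ℤ and all integers s ≥ 2: (L_1^s)_{kk} ∈ R[x_{k−s+1}, …, x_{k+s−1}, y_{k−s}, …, y_{k+s−2}] and (L_1^s)_{k+1,k} ∈ R[x_{k−s+1}, …, x_{k+s}, y_{k−s}, …, y_{k+s−1}]. More precisely, there exist polynomials F_1 ∈ R[x_{k−s+2}, …, x_{k+s−3}, y_{k−s+1}, …, y_{k+s−3}] and F_2 ∈ R[x_{k−s+2}, …, x_{k+s−1}, y_{k−s+1}, …, y_{k+s−2}] such that (L_1^s)_{kk} = −x_{k+s−1}y_{k−1}·∏_{i=1}^{s−1}v_{k+i−1} + x_{k+s−2}²y_{k+s−3}y_{k−1}·∏_{i=1}^{s−2}v_{k+i−1} − x_{k+s−2}(y_{k−2}v_{k−1} − 2y_{k−1}Σ_{j=1}^{s−2}x_{k+j−1}y_{k+j−2})·∏_{i=1}^{s−2}v_{k+i−1}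 + F_1 − x_k y_{k−s}·∏_{i=1}^{s−1}v_{k−i}, and (L_1^s)_{k+1,k} = −x_{k+s}y_{k−1}·∏_{i=1}^{s−1}v_{k+i} − x_{k+1}y_{k−s}·∏_{i=1}^{s−1}v_{k−i} + F_2 (when s = 2 the two coinciding displayed terms are counted only once). -/
/-!
Common definitions: the matrices `L₁`, `L₂` of the Toeplitz lattice, their powers,
the recursion polynomials `Γ_k` (here `GamA`), `Γ̃_k` (here `GamB`) and their
self-dual version (`GamSD`), together with the notion of formal Laurent
solutions of the (self-dual) Toeplitz lattice.
-/

noncomputable section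

namespace SingConf

/-- The variable `x_i`, in the polynomial ring over `R` in all `x_i, y_i (i ∈ ℤ)`. -/
def xv (R : Type*) [CommRing R] (i : ℤ) : MvPolynomial (ℤ ⊕ ℤ) R := MvPolynomial.X (Sum.inl i)

/-- The variable `y_i`. -/
def yv (R : Type*) [CommRing R] (i : ℤ) : MvPolynomial (ℤ ⊕ ℤ) R := MvPolynomial.X (Sum.inr i)

/-- `v_i = 1 - x_i y_i`. -/
def vv (R : Type*) [CommRing R] (i : ℤ) : MvPolynomial (ℤ ⊕ ℤ) R := 1 - xv R i * yv R i

end SingConf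


namespace SingConfAux

lemma Icc_top {a b : ℤ} (h : a ≤ b) : Finset.Icc a b = insert b (Finset.Icc a (b-1)) := by
  ext m; simp [Finset.mem_Icc]; omega

lemma Icc_bot {a b : ℤ} (h : a ≤ b) : Finset.Icc a b = insert a (Finset.Icc (a+1) b) := by
  ext m; simp [Finset.mem_Icc]; omega

lemma sum_Icc_top {M : Type*} [AddCommMonoid M] (f : ℤ → M) {a b : ℤ} (h : a ≤ b) :
    ∑ m ∈ Finset.Icc a b, f m = (∑ m ∈ Finset.Icc a (b-1), f m) + f b := by
  rw [Icc_top h, Finset.sum_insert (by simp), add_comm]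

lemma sum_Icc_bot {M : Type*} [AddCommMonoid M] (f : ℤ → M) {a b : ℤ} (h : a ≤ b) :
    ∑ m ∈ Finset.Icc a b, f m = f a + ∑ m ∈ Finset.Icc (a+1) b, f m := by
  rw [Icc_bot h, Finset.sum_insert (by simp)]

lemma prod_Icc_top {M : Type*} [CommMonoid M] (f : ℤ → M) {a b : ℤ} (h : a ≤ b) :
    ∏ m ∈ Finset.Icc a b, f m = (∏ m ∈ Finset.Icc a (b-1), f m) * f b := by
  rw [Icc_top h, Finset.prod_insert (by simp), mul_comm]

lemma prod_Icc_bot {M : Type*} [CommMonoid M] (f : ℤ → M) {a b : ℤ} (h : a ≤ b) :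
    ∏ m ∈ Finset.Icc a b, f m = f a * ∏ m ∈ Finset.Icc (a+1) b, f m := by
  rw [Icc_bot h, Finset.prod_insert (by simp)]

lemma sum_shift {M : Type*} [AddCommMonoid M] (f : ℤ → M) (a : ℤ) (n : ℕ) :
    ∑ j ∈ Finset.Icc 1 n, f (a + j) = ∑ u ∈ Finset.Icc (a+1) (a+n), f u := by
  induction n with
  | zero => simp
  | succ n ih =>
    rw [Finset.sum_Icc_succ_top (by omega), ih]
    push_cast
    rw [sum_Icc_top f (show a+1 ≤ a+((n:ℤ)+1) by omega), show a+((n:ℤ)+1)-1 = a+n by ring]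

lemma prod_shift {M : Type*} [CommMonoid M] (f : ℤ → M) (a : ℤ) (n : ℕ) :
    ∏ j ∈ Finset.Icc 1 n, f (a + j) = ∏ u ∈ Finset.Icc (a+1) (a+n), f u := by
  induction n with
  | zero => simp
  | succ n ih =>
    rw [Finset.prod_Icc_succ_top (by omega), ih]
    push_cast
    rw [prod_Icc_top f (show a+1 ≤ a+((n:ℤ)+1) by omega), show a+((n:ℤ)+1)-1 = a+n by ring]

lemma prod_shift_neg {M : Type*} [CommMonoid M] (f : ℤ → M) (a : ℤ) (n : ℕ) :
    ∏ j ∈ Finset.Icc 1 n, f (a - j) = ∏ u ∈ Finset.Icc (a - n) (a - 1), f u := by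
  induction n with
  | zero => simp
  | succ n ih =>
    rw [Finset.prod_Icc_succ_top (by omega), ih]
    push_cast
    rw [prod_Icc_bot f (show a-((n:ℤ)+1) ≤ a-1 by omega), show a-((n:ℤ)+1)+1 = a-n by ring,
      mul_comm]

end SingConfAux


namespace SingConf
section Aux
open SingConfAux
variable {A : Type*} [CommRing A] (x y : ℤ → A)

lemma L1pow_succ_def (s : ℕ) (i j : ℤ) :
    L1pow x y (s+1) i j = ∑ l ∈ Finset.Icc (j - 1) (i + (s : ℤ)), L1pow x y s i l * L1e x y l j := rfl

lemma L1e_of_le {l j : ℤ} (h : j ≤ l + 1) :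
    L1e x y l j = -(x l * y (j-1)) + (if l + 1 = j then 1 else 0) := by simp [L1e, h]

lemma L1pow_zero_entry (i j : ℤ) : L1pow x y 0 i j = if i = j then 1 else 0 := rfl

lemma L1pow_eq_zero (s : ℕ) : ∀ i j : ℤ, i + s < j → L1pow x y s i j = 0 := by
  induction s with
  | zero => intro i j h; rw [L1pow_zero_entry, if_neg (by push_cast at h; omega)]
  | succ s ih =>
    intro i j h
    push_cast at h
    rw [L1pow_succ_def]
    refine Finset.sum_eq_zero fun l hl => ?_
    simp only [Finset.mem_Icc] at hl
    rw [ih i l (by omega), zero_mul]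

lemma L1pow_rec (s : ℕ) (i j : ℤ) (h : j ≤ i + s + 1) :
    L1pow x y (s+1) i j = L1pow x y s i (j-1)
      - y (j-1) * ∑ l ∈ Finset.Icc (j-1) (i+(s:ℤ)), x l * L1pow x y s i l := by
  rw [L1pow_succ_def]
  have key : ∀ l ∈ Finset.Icc (j-1) (i+(s:ℤ)), L1pow x y s i l * L1e x y l j
      = (if l = j - 1 then L1pow x y s i (j-1) else 0) + (-(y (j-1) * (x l * L1pow x y s i l))) := by
    intro l hl
    simp only [Finset.mem_Icc] at hl
    rw [L1e_of_le x y (show j ≤ l + 1 by omega)]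
    by_cases hc : l = j - 1
    · subst hc; rw [if_pos (by omega), if_pos rfl]; ring
    · rw [if_neg (by omega), if_neg hc]; ring
  rw [Finset.sum_congr rfl key, Finset.sum_add_distrib, Finset.sum_ite_eq' _ (j-1),
    if_pos (by simp only [Finset.mem_Icc]; omega)]
  rw [Finset.sum_neg_distrib, ← Finset.mul_sum]
  ring

lemma L1pow_rec' (s : ℕ) (b i j : ℤ) (hb : b = i + s) (h : j ≤ b + 1) :
    L1pow x y (s+1) i j = L1pow x y s i (j-1)
      - y (j-1) * ∑ l ∈ Finset.Icc (j-1) b, x l * L1pow x y s i l := by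
  subst hb; exact L1pow_rec x y s i j h

lemma L1pow_top' (s : ℕ) : ∀ i j : ℤ, j = i + s →
    L1pow x y s i j = ∏ u ∈ Finset.Icc i (j - 1), (1 - x u * y u) := by
  induction s with
  | zero =>
    intro i j h
    rw [L1pow_zero_entry, if_pos (by push_cast at h; omega),
      Finset.Icc_eq_empty (by push_cast at h; omega), Finset.prod_empty]
  | succ s ih =>
    intro i j h
    push_cast at h
    rw [L1pow_rec' x y s (j-1) i j (by omega) (by omega), Finset.Icc_self,
      Finset.sum_singleton, ih i (j-1) (by omega),
      prod_Icc_top (fun u => 1 - x u * y u) (show i ≤ j - 1 by omega)]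
    ring

lemma L1pow_neartop' (s : ℕ) : ∀ i j : ℤ, j = i + s →
    L1pow x y (s+1) i j = -(∑ m ∈ Finset.Icc i j, x m * y (m-1))
      * ∏ u ∈ Finset.Icc i (j - 1), (1 - x u * y u) := by
  induction s with
  | zero =>
    intro i j h
    have h' : j = i := by push_cast at h; omega
    subst h'
    rw [L1pow_rec' x y 0 j j j (by push_cast; ring) (by omega),
      sum_Icc_bot (fun l => x l * L1pow x y 0 j l) (show j-1 ≤ j by omega),
      show j - 1 + 1 = j by ring, Finset.Icc_self, Finset.sum_singleton,
      L1pow_zero_entry, L1pow_zero_entry, if_neg (by omega), if_pos rfl,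
      Finset.sum_singleton, Finset.Icc_eq_empty (by omega), Finset.prod_empty]
    ring
  | succ s ih =>
    intro i j h
    push_cast at h
    rw [L1pow_rec' x y (s+1) j i j (by push_cast; omega) (by omega),
      sum_Icc_top (fun l => x l * L1pow x y (s+1) i l) (show j - 1 ≤ j by omega),
      Finset.Icc_self, Finset.sum_singleton,
      ih i (j-1) (by omega), L1pow_top' x y (s+1) i j (by push_cast; omega),
      sum_Icc_top (fun m => x m * y (m-1)) (show i ≤ j by omega),
      prod_Icc_top (fun u => 1 - x u * y u) (show i ≤ j - 1 by omega)]
    ring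

end Aux
end SingConf

namespace SingConf
section Mem
open SingConfAux
variable (R : Type*) [CommRing R]

def MemXY (px py : ℤ → Prop) (p : MvPolynomial (ℤ ⊕ ℤ) R) : Prop :=
  p ∈ Algebra.adjoin R ({q | ∃ m, px m ∧ q = xv R m} ∪ {q | ∃ m, py m ∧ q = yv R m})

variable {R} {px py px' py' : ℤ → Prop} {p q : MvPolynomial (ℤ ⊕ ℤ) R}

lemma MemXY.xm {m : ℤ} (h : px m) : MemXY R px py (xv R m) :=
  Algebra.subset_adjoin (Or.inl ⟨m, h, rfl⟩)

lemma MemXY.ym {m : ℤ} (h : py m) : MemXY R px py (yv R m) :=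
  Algebra.subset_adjoin (Or.inr ⟨m, h, rfl⟩)

lemma MemXY.add (h1 : MemXY R px py p) (h2 : MemXY R px py q) : MemXY R px py (p + q) :=
  add_mem h1 h2

lemma MemXY.mul (h1 : MemXY R px py p) (h2 : MemXY R px py q) : MemXY R px py (p * q) :=
  mul_mem h1 h2

lemma MemXY.neg (h1 : MemXY R px py p) : MemXY R px py (-p) := neg_mem h1

lemma MemXY.sub (h1 : MemXY R px py p) (h2 : MemXY R px py q) : MemXY R px py (p - q) :=
  sub_mem h1 h2

lemma MemXY.one : MemXY R px py (1 : MvPolynomial (ℤ ⊕ ℤ) R) := one_mem _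

lemma MemXY.zero : MemXY R px py (0 : MvPolynomial (ℤ ⊕ ℤ) R) := zero_mem _

lemma MemXY.vm {m : ℤ} (h1 : px m) (h2 : py m) : MemXY R px py (vv R m) :=
  sub_mem (one_mem _) (mul_mem (MemXY.xm h1) (MemXY.ym h2))

lemma MemXY.sum {ι : Type*} {t : Finset ι} {f : ι → MvPolynomial (ℤ ⊕ ℤ) R}
    (h : ∀ i ∈ t, MemXY R px py (f i)) : MemXY R px py (∑ i ∈ t, f i) :=
  Subalgebra.sum_mem _ h

lemma MemXY.prod {ι : Type*} {t : Finset ι} {f : ι → MvPolynomial (ℤ ⊕ ℤ) R}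
    (h : ∀ i ∈ t, MemXY R px py (f i)) : MemXY R px py (∏ i ∈ t, f i) :=
  Subalgebra.prod_mem _ h

lemma MemXY.mono (hx : ∀ m, px m → px' m) (hy : ∀ m, py m → py' m)
    (h : MemXY R px py p) : MemXY R px' py' p := by
  refine Algebra.adjoin_mono ?_ h
  rintro q (⟨m, hm, rfl⟩ | ⟨m, hm, rfl⟩)
  exacts [Or.inl ⟨m, hx m hm, rfl⟩, Or.inr ⟨m, hy m hm, rfl⟩]

lemma MemXY.to_adjoin {a b c d : ℤ}
    (h : MemXY R (fun m => a ≤ m ∧ m ≤ b) (fun m => c ≤ m ∧ m ≤ d) p) :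
    p ∈ Algebra.adjoin R ({q | ∃ i : ℤ, a ≤ i ∧ i ≤ b ∧ q = xv R i} ∪
      {q | ∃ i : ℤ, c ≤ i ∧ i ≤ d ∧ q = yv R i}) := by
  refine Algebra.adjoin_mono ?_ h
  rintro q (⟨m, ⟨h1, h2⟩, rfl⟩ | ⟨m, ⟨h1, h2⟩, rfl⟩)
  exacts [Or.inl ⟨m, h1, h2, rfl⟩, Or.inr ⟨m, h1, h2, rfl⟩]

end Mem

section MpSec
open SingConfAux
variable {A : Type*} [CommRing A] (x y : ℤ → A)

/-- remainder part of the entry `(L₁^s)_{il}` after removing the extreme terms. -/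
def Mp (s : ℕ) (i l : ℤ) : A :=
  L1pow x y s i l + x (i + s - 1) * y (l-1) * (∏ u ∈ Finset.Icc i (i + s - 2), (1 - x u * y u))
    + x i * y (l - s) * (∏ u ∈ Finset.Icc (l - s + 1) (l-1), (1 - x u * y u))

lemma L1pow_eq_Mp (s : ℕ) (i l : ℤ) :
    L1pow x y s i l = -(x (i + s - 1) * y (l-1)) * (∏ u ∈ Finset.Icc i (i + s - 2), (1 - x u * y u))
      - x i * y (l - s) * (∏ u ∈ Finset.Icc (l - s + 1) (l-1), (1 - x u * y u)) + Mp x y s i l := by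
  unfold Mp; ring

lemma L1pow_one (i j : ℤ) (h : j ≤ i + 1) :
    L1pow x y 1 i j = -(x i * y (j-1)) + (if i + 1 = j then 1 else 0) := by
  rw [L1pow_rec' x y 0 i i j (by push_cast; ring) (by omega)]
  have key : ∀ l ∈ Finset.Icc (j-1) i, x l * L1pow x y 0 i l = if l = i then x i else 0 := by
    intro l hl
    rw [L1pow_zero_entry]
    by_cases hc : l = i
    · subst hc; rw [if_pos rfl, if_pos rfl, mul_one]
    · rw [if_neg (fun hh => hc hh.symm), mul_zero, if_neg hc]
  rw [Finset.sum_congr rfl key, Finset.sum_ite_eq' _ i, if_pos (by simp only [Finset.mem_Icc]; omega),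
    L1pow_zero_entry]
  by_cases hc : i + 1 = j
  · rw [if_pos (by omega), if_pos hc]; ring
  · rw [if_neg (by omega), if_neg hc]; ring

lemma Mp_two (i l : ℤ) (h : l ≤ i + 1) :
    Mp x y 2 i l = y (l-1) * x i * ∑ m ∈ Finset.Icc l i, x m * y (m-1) := by
  unfold Mp
  rw [show ((2:ℕ):ℤ) = 2 by norm_num, show i + 2 - 1 = i + 1 by ring, show i + 2 - 2 = i by ring,
    show l - 2 + 1 = l - 1 by ring, Finset.Icc_self, Finset.prod_singleton, Finset.Icc_self,
    Finset.prod_singleton]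
  rw [show (2:ℕ) = 1 + 1 by norm_num, L1pow_rec' x y 1 (i+1) i l (by push_cast; ring) (by omega),
    L1pow_one x y i (l-1) (by omega), if_neg (by omega)]
  have key : ∀ m ∈ Finset.Icc (l-1) (i+1), x m * L1pow x y 1 i m
      = -(x i * (x m * y (m-1))) + (if m = i+1 then x (i+1) else 0) := by
    intro m hm
    simp only [Finset.mem_Icc] at hm
    rw [L1pow_one x y i m (by omega)]
    by_cases hc : m = i + 1
    · subst hc; rw [if_pos rfl, if_pos rfl]; ring
    · rw [if_neg (by omega), if_neg hc]; ring
  rw [Finset.sum_congr rfl key, Finset.sum_add_distrib, Finset.sum_ite_eq' _ (i+1),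
    if_pos (by simp only [Finset.mem_Icc]; omega), Finset.sum_neg_distrib, ← Finset.mul_sum,
    sum_Icc_bot (fun m => x m * y (m-1)) (show l - 1 ≤ i + 1 by omega),
    show l - 1 + 1 = l by ring,
    sum_Icc_top (fun m => x m * y (m-1)) (show l ≤ i + 1 by omega),
    show i + 1 - 1 = i by ring]
  set S := ∑ m ∈ Finset.Icc l i, x m * y (m-1) with hS
  ring_nf

end MpSec
end SingConf

namespace SingConf
section MpStep
open SingConfAux
variable {A : Type*} [CommRing A] (x y : ℤ → A)

lemma Mp_eq' (s : ℕ) (a c i l : ℤ) (ha : a = i + s - 1) (hc : c = l - s) :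
    Mp x y s i l = L1pow x y s i l
      + x a * y (l-1) * (∏ u ∈ Finset.Icc i (a-1), (1 - x u * y u))
      + x i * y c * (∏ u ∈ Finset.Icc (c+1) (l-1), (1 - x u * y u)) := by
  subst ha hc
  unfold Mp
  rw [show i + (s:ℤ) - 1 - 1 = i + (s:ℤ) - 2 by ring]

lemma L1pow_eq_Mp' (s : ℕ) (a c i l : ℤ) (ha : a = i + s - 1) (hc : c = l - s) :
    L1pow x y s i l = -(x a * y (l-1)) * (∏ u ∈ Finset.Icc i (a-1), (1 - x u * y u))
      - x i * y c * (∏ u ∈ Finset.Icc (c+1) (l-1), (1 - x u * y u)) + Mp x y s i l := by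
  rw [Mp_eq' x y s a c i l ha hc]; ring

lemma Mp_succ (n : ℕ) (i l : ℤ) (h : l ≤ i + n + 2) :
    Mp x y (n+3) i l =
      Mp x y (n+2) i (l-1)
      - x (i+n+1) * y (l-2) * (∏ u ∈ Finset.Icc i (i+n), (1 - x u * y u))
      - y (l-1) * ∑ m ∈ Finset.Icc (l-1) (i+n+1), x m * Mp x y (n+2) i m
      + y (l-1) * x (i+n+1) * (∏ u ∈ Finset.Icc i (i+n), (1 - x u * y u))
          * (∑ m ∈ Finset.Icc (l-1) (i+n+1), x m * y (m-1))
      + y (l-1) * x i * ∑ m ∈ Finset.Icc l (i+n+1), x m * y (m-(n:ℤ)-2)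
          * (∏ u ∈ Finset.Icc (m-(n:ℤ)-1) (m-1), (1 - x u * y u)) := by
  rw [Mp_eq' x y (n+3) (i+n+2) (l-(n:ℤ)-3) i l (by push_cast; ring) (by push_cast; ring),
    show i+(n:ℤ)+2-1 = i+n+1 by ring, show l-(n:ℤ)-3+1 = l-(n:ℤ)-2 by ring]
  rw [L1pow_rec' x y (n+2) (i+(n:ℤ)+2) i l (by push_cast; ring) (by omega)]
  rw [sum_Icc_top (fun m => x m * L1pow x y (n+2) i m) (show l-1 ≤ i+(n:ℤ)+2 by omega),
    show i+(n:ℤ)+2-1 = i+(n:ℤ)+1 by ring]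
  rw [L1pow_top' x y (n+2) i (i+(n:ℤ)+2) (by push_cast; ring),
    show i+(n:ℤ)+2-1 = i+(n:ℤ)+1 by ring]
  have key : ∀ m ∈ Finset.Icc (l-1) (i+(n:ℤ)+1), x m * L1pow x y (n+2) i m
      = x m * Mp x y (n+2) i m
        - x (i+(n:ℤ)+1) * (∏ u ∈ Finset.Icc i (i+(n:ℤ)), (1 - x u * y u)) * (x m * y (m-1))
        - x i * (x m * y (m-(n:ℤ)-2) * (∏ u ∈ Finset.Icc (m-(n:ℤ)-1) (m-1), (1 - x u * y u))) := by
    intro m hm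
    rw [L1pow_eq_Mp' x y (n+2) (i+(n:ℤ)+1) (m-(n:ℤ)-2) i m (by push_cast; ring) (by push_cast; ring),
      show i+(n:ℤ)+1-1 = i+(n:ℤ) by ring, show m-(n:ℤ)-2+1 = m-(n:ℤ)-1 by ring]
    ring
  rw [Finset.sum_congr rfl key, Finset.sum_sub_distrib, Finset.sum_sub_distrib,
    ← Finset.mul_sum, ← Finset.mul_sum]
  rw [L1pow_eq_Mp' x y (n+2) (i+(n:ℤ)+1) (l-(n:ℤ)-3) i (l-1) (by push_cast; ring) (by push_cast; ring),
    show i+(n:ℤ)+1-1 = i+(n:ℤ) by ring, show l-(n:ℤ)-3+1 = l-(n:ℤ)-2 by ring,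
    show l-1-1 = l-2 by ring]
  rw [sum_Icc_bot (fun m => x m * y (m-(n:ℤ)-2) * (∏ u ∈ Finset.Icc (m-(n:ℤ)-1) (m-1), (1 - x u * y u)))
      (show l-1 ≤ i+(n:ℤ)+1 by omega), show l-1+1 = l by ring,
    show l-1-(n:ℤ)-2 = l-(n:ℤ)-3 by ring, show l-1-(n:ℤ)-1 = l-(n:ℤ)-2 by ring]
  rw [prod_Icc_top (fun u => 1 - x u * y u) (show l-(n:ℤ)-2 ≤ l-1 by omega),
    show l-1-1 = l-2 by ring]
  set S1 := ∑ m ∈ Finset.Icc (l-1) (i+(n:ℤ)+1), x m * Mp x y (n+2) i m with hS1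
  set S2 := ∑ m ∈ Finset.Icc (l-1) (i+(n:ℤ)+1), x m * y (m-1) with hS2
  set S3 := ∑ m ∈ Finset.Icc l (i+(n:ℤ)+1), x m * y (m-(n:ℤ)-2)
      * (∏ u ∈ Finset.Icc (m-(n:ℤ)-1) (m-1), (1 - x u * y u)) with hS3
  set P1 := ∏ u ∈ Finset.Icc i (i+(n:ℤ)), (1 - x u * y u) with hP1
  set P2 := ∏ u ∈ Finset.Icc (l-(n:ℤ)-2) (l-2), (1 - x u * y u) with hP2
  set P3 := ∏ u ∈ Finset.Icc i (i+(n:ℤ)+1), (1 - x u * y u) with hP3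
  ring

end MpStep
end SingConf

namespace SingConf
section Gsec
open SingConfAux
variable {R : Type*} [CommRing R]

lemma MemXY.v' {px py : ℤ → Prop} {m : ℤ} (h1 : px m) (h2 : py m) :
    MemXY R px py (1 - xv R m * yv R m) :=
  MemXY.sub MemXY.one (MemXY.mul (MemXY.xm h1) (MemXY.ym h2))

lemma Mp_mem (n : ℕ) : ∀ i l : ℤ, l ≤ i + n + 1 →
    MemXY R (fun m => (l - n ≤ m ∧ m ≤ i + n) ∨ m = i)
            (fun m => (l - n - 1 ≤ m ∧ m ≤ i + n - 1) ∨ m = l - 1)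
            (Mp (xv R) (yv R) (n+2) i l) := by
  induction n with
  | zero =>
    intro i l h
    push_cast at h ⊢
    rw [Mp_two (xv R) (yv R) i l (by omega)]
    refine MemXY.mul (MemXY.mul (MemXY.ym (Or.inr rfl)) (MemXY.xm (Or.inr rfl))) ?_
    refine MemXY.sum fun m hm => ?_
    simp only [Finset.mem_Icc] at hm
    exact MemXY.mul (MemXY.xm (Or.inl ⟨by omega, by omega⟩))
      (MemXY.ym (Or.inl ⟨by omega, by omega⟩))
  | succ n ih =>
    intro i l h
    have h' : l ≤ i + (n:ℤ) + 2 := by push_cast at h; omega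
    rw [Mp_succ (xv R) (yv R) n i l h']
    have hvt : MemXY R (fun m => (l - ((n:ℤ)+1) ≤ m ∧ m ≤ i + ((n:ℤ)+1)) ∨ m = i)
        (fun m => (l - ((n:ℤ)+1) - 1 ≤ m ∧ m ≤ i + ((n:ℤ)+1) - 1) ∨ m = l - 1)
        (∏ u ∈ Finset.Icc i (i+(n:ℤ)), (1 - xv R u * yv R u)) := by
      refine MemXY.prod fun u hu => ?_
      simp only [Finset.mem_Icc] at hu
      refine MemXY.v' ?_ ?_
      · rcases eq_or_ne u i with rfl | hne
        · exact Or.inr rfl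
        · exact Or.inl ⟨by omega, by omega⟩
      · exact Or.inl ⟨by omega, by omega⟩
    have goal_eq : ∀ p : MvPolynomial (ℤ ⊕ ℤ) R,
        MemXY R (fun m => (l - ((n:ℤ)+1) ≤ m ∧ m ≤ i + ((n:ℤ)+1)) ∨ m = i)
          (fun m => (l - ((n:ℤ)+1) - 1 ≤ m ∧ m ≤ i + ((n:ℤ)+1) - 1) ∨ m = l - 1) p →
        MemXY R (fun m => (l - ((n+1:ℕ):ℤ) ≤ m ∧ m ≤ i + ((n+1:ℕ):ℤ)) ∨ m = i)
          (fun m => (l - ((n+1:ℕ):ℤ) - 1 ≤ m ∧ m ≤ i + ((n+1:ℕ):ℤ) - 1) ∨ m = l - 1) p := by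
      intro p hp
      refine hp.mono (fun m hm => ?_) (fun m hm => ?_) <;>
        · rcases hm with hm | hm
          · exact Or.inl ⟨by push_cast; omega, by push_cast; omega⟩
          · exact Or.inr hm
    refine goal_eq _ ?_
    refine MemXY.add (MemXY.add (MemXY.sub (MemXY.sub ?_ ?_) ?_) ?_) ?_
    · -- Mp (n+2) i (l-1)
      refine (ih i (l-1) (by omega)).mono (fun m hm => ?_) (fun m hm => ?_)
      · rcases hm with hm | hm
        · exact Or.inl ⟨by omega, by omega⟩
        · exact Or.inr hm
      · rcases hm with hm | hm
        · exact Or.inl ⟨by omega, by omega⟩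
        · exact Or.inl ⟨by omega, by omega⟩
    · exact MemXY.mul (MemXY.mul (MemXY.xm (Or.inl ⟨by omega, by omega⟩))
        (MemXY.ym (Or.inl ⟨by omega, by omega⟩))) hvt
    · refine MemXY.mul (MemXY.ym (Or.inr rfl)) (MemXY.sum fun m hm => ?_)
      simp only [Finset.mem_Icc] at hm
      refine MemXY.mul (MemXY.xm (Or.inl ⟨by omega, by omega⟩)) ?_
      refine (ih i m (by omega)).mono (fun u hu => ?_) (fun u hu => ?_)
      · rcases hu with hu | hu
        · exact Or.inl ⟨by omega, by omega⟩
        · exact Or.inr hu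
      · rcases hu with hu | hu
        · exact Or.inl ⟨by omega, by omega⟩
        · exact Or.inl ⟨by omega, by omega⟩
    · refine MemXY.mul (MemXY.mul (MemXY.mul (MemXY.ym (Or.inr rfl))
        (MemXY.xm (Or.inl ⟨by omega, by omega⟩))) hvt) (MemXY.sum fun m hm => ?_)
      simp only [Finset.mem_Icc] at hm
      exact MemXY.mul (MemXY.xm (Or.inl ⟨by omega, by omega⟩))
        (MemXY.ym (Or.inl ⟨by omega, by omega⟩))
    · refine MemXY.mul (MemXY.mul (MemXY.ym (Or.inr rfl)) (MemXY.xm (Or.inr rfl)))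
        (MemXY.sum fun m hm => ?_)
      simp only [Finset.mem_Icc] at hm
      refine MemXY.mul (MemXY.mul (MemXY.xm (Or.inl ⟨by omega, by omega⟩))
        (MemXY.ym (Or.inl ⟨by omega, by omega⟩))) (MemXY.prod fun u hu => ?_)
      simp only [Finset.mem_Icc] at hu
      exact MemXY.v' (Or.inl ⟨by omega, by omega⟩) (Or.inl ⟨by omega, by omega⟩)

end Gsec
end SingConf

namespace SingConf
section DiagSec
open SingConfAux
variable {A : Type*} [CommRing A] (x y : ℤ → A)

lemma diag_id (n : ℕ) (k : ℤ) :
    L1pow x y (n+3) k k =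
      -(x (k+(n:ℤ)+2) * y (k-1)) * (∏ u ∈ Finset.Icc k (k+(n:ℤ)+1), (1 - x u * y u))
      + x (k+(n:ℤ)+1)^2 * y (k+(n:ℤ)) * y (k-1) * (∏ u ∈ Finset.Icc k (k+(n:ℤ)), (1 - x u * y u))
      - x (k+(n:ℤ)+1) * (y (k-2) * (1 - x (k-1) * y (k-1))
          - 2 * y (k-1) * ∑ m ∈ Finset.Icc k (k+(n:ℤ)), x m * y (m-1))
          * (∏ u ∈ Finset.Icc k (k+(n:ℤ)), (1 - x u * y u))
      + (Mp x y (n+2) k (k-1)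
          - y (k-1) * ∑ m ∈ Finset.Icc (k-1) (k+(n:ℤ)), x m * Mp x y (n+2) k m
          + y (k-1) * x k * ∑ m ∈ Finset.Icc k (k+(n:ℤ)), x m * y (m-(n:ℤ)-2)
              * (∏ u ∈ Finset.Icc (m-(n:ℤ)-1) (m-1), (1 - x u * y u)))
      - x k * y (k-(n:ℤ)-3) * (∏ u ∈ Finset.Icc (k-(n:ℤ)-2) (k-1), (1 - x u * y u)) := by
  rw [show (n+3 : ℕ) = (n+2)+1 by ring]
  rw [L1pow_rec' x y (n+2) (k+(n:ℤ)+2) k k (by push_cast; ring) (by omega)]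
  rw [sum_Icc_top (fun m => x m * L1pow x y (n+2) k m) (show k-1 ≤ k+(n:ℤ)+2 by omega),
    show k+(n:ℤ)+2-1 = k+(n:ℤ)+1 by ring]
  rw [sum_Icc_top (fun m => x m * L1pow x y (n+2) k m) (show k-1 ≤ k+(n:ℤ)+1 by omega),
    show k+(n:ℤ)+1-1 = k+(n:ℤ) by ring]
  rw [L1pow_top' x y (n+2) k (k+(n:ℤ)+2) (by push_cast; ring),
    show k+(n:ℤ)+2-1 = k+(n:ℤ)+1 by ring]
  rw [show (n+2 : ℕ) = (n+1)+1 by ring]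
  rw [L1pow_neartop' x y (n+1) k (k+(n:ℤ)+1) (by push_cast; ring),
    show k+(n:ℤ)+1-1 = k+(n:ℤ) by ring]
  rw [sum_Icc_top (fun m => x m * y (m-1)) (show k ≤ k+(n:ℤ)+1 by omega),
    show k+(n:ℤ)+1-1 = k+(n:ℤ) by ring]
  rw [show (n+1)+1 = n+2 by ring]
  have key : ∀ m ∈ Finset.Icc (k-1) (k+(n:ℤ)), x m * L1pow x y (n+2) k m
      = x m * Mp x y (n+2) k m
        - x (k+(n:ℤ)+1) * (∏ u ∈ Finset.Icc k (k+(n:ℤ)), (1 - x u * y u)) * (x m * y (m-1))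
        - x k * (x m * y (m-(n:ℤ)-2) * (∏ u ∈ Finset.Icc (m-(n:ℤ)-1) (m-1), (1 - x u * y u))) := by
    intro m hm
    rw [L1pow_eq_Mp' x y (n+2) (k+(n:ℤ)+1) (m-(n:ℤ)-2) k m (by push_cast; ring) (by push_cast; ring),
      show k+(n:ℤ)+1-1 = k+(n:ℤ) by ring, show m-(n:ℤ)-2+1 = m-(n:ℤ)-1 by ring]
    ring
  rw [Finset.sum_congr rfl key, Finset.sum_sub_distrib, Finset.sum_sub_distrib,
    ← Finset.mul_sum, ← Finset.mul_sum]
  rw [L1pow_eq_Mp' x y (n+2) (k+(n:ℤ)+1) (k-(n:ℤ)-3) k (k-1) (by push_cast; ring) (by push_cast; ring),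
    show k+(n:ℤ)+1-1 = k+(n:ℤ) by ring, show k-(n:ℤ)-3+1 = k-(n:ℤ)-2 by ring,
    show k-1-1 = k-2 by ring]
  rw [sum_Icc_bot (fun m => x m * y (m-1)) (show k-1 ≤ k+(n:ℤ) by omega),
    show k-1+1 = k by ring, show k-1-1 = k-2 by ring]
  rw [sum_Icc_bot (fun m => x m * y (m-(n:ℤ)-2) * (∏ u ∈ Finset.Icc (m-(n:ℤ)-1) (m-1), (1 - x u * y u)))
      (show k-1 ≤ k+(n:ℤ) by omega), show k-1+1 = k by ring,
    show k-1-(n:ℤ)-2 = k-(n:ℤ)-3 by ring, show k-1-(n:ℤ)-1 = k-(n:ℤ)-2 by ring,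
    show k-1-1 = k-2 by ring]
  rw [prod_Icc_top (fun u => 1 - x u * y u) (show k-(n:ℤ)-2 ≤ k-1 by omega),
    show k-1-1 = k-2 by ring]
  set S1 := ∑ m ∈ Finset.Icc (k-1) (k+(n:ℤ)), x m * Mp x y (n+2) k m with hS1
  set S2 := ∑ m ∈ Finset.Icc k (k+(n:ℤ)), x m * y (m-1) with hS2
  set S3 := ∑ m ∈ Finset.Icc k (k+(n:ℤ)), x m * y (m-(n:ℤ)-2)
      * (∏ u ∈ Finset.Icc (m-(n:ℤ)-1) (m-1), (1 - x u * y u)) with hS3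
  set P1 := ∏ u ∈ Finset.Icc k (k+(n:ℤ)), (1 - x u * y u) with hP1
  set P2 := ∏ u ∈ Finset.Icc k (k+(n:ℤ)+1), (1 - x u * y u) with hP2
  set P3 := ∏ u ∈ Finset.Icc (k-(n:ℤ)-2) (k-2), (1 - x u * y u) with hP3
  ring

end DiagSec
end SingConf

namespace SingConf
section Final
open SingConfAux
variable {R : Type*} [CommRing R]

lemma vv_def (i : ℤ) : vv R i = 1 - xv R i * yv R i := rfl

lemma prod_shiftA {M : Type*} [CommMonoid M] (f : ℤ → M) (k : ℤ) (n : ℕ) :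
    ∏ i ∈ Finset.Icc 1 n, f (k + (i:ℤ) - 1) = ∏ u ∈ Finset.Icc k (k + (n:ℤ) - 1), f u := by
  rw [show (∏ i ∈ Finset.Icc 1 n, f (k + (i:ℤ) - 1)) = ∏ i ∈ Finset.Icc 1 n, f ((k-1) + (i:ℤ))
      from Finset.prod_congr rfl (fun i _ => by rw [show k + (i:ℤ) - 1 = k - 1 + i by ring]),
    prod_shift f (k-1) n, show k-1+1 = k by ring, show k-1+(n:ℤ) = k+(n:ℤ)-1 by ring]

lemma sum_shiftA {M : Type*} [AddCommMonoid M] (f : ℤ → M) (k : ℤ) (n : ℕ) :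
    ∑ i ∈ Finset.Icc 1 n, f (k + (i:ℤ) - 1) = ∑ u ∈ Finset.Icc k (k + (n:ℤ) - 1), f u := by
  rw [show (∑ i ∈ Finset.Icc 1 n, f (k + (i:ℤ) - 1)) = ∑ i ∈ Finset.Icc 1 n, f ((k-1) + (i:ℤ))
      from Finset.sum_congr rfl (fun i _ => by rw [show k + (i:ℤ) - 1 = k - 1 + i by ring]),
    sum_shift f (k-1) n, show k-1+1 = k by ring, show k-1+(n:ℤ) = k+(n:ℤ)-1 by ring]

end Final
end SingConf

open SingConf

/-- For all `k ∈ ℤ` and `s ≥ 2`, the entries `(L₁^s)_{kk}` and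
`(L₁^s)_{k+1,k}`, as polynomials over `R` in the variables `x_i, y_i`, involve only the
stated ranges of variables; more precisely they have the stated explicit leading terms, up
to polynomials `F₁`, `F₂` in the stated smaller ranges of variables (when `s = 2` the two
coinciding displayed terms of `(L₁^s)_{kk}` are counted only once — whence the corrective
`if s = 2` term below). -/
theorem statement18 (R : Type*) [CommRing R] (s : ℕ) (hs : 2 ≤ s) (k : ℤ) :
    -- the variable ranges:
    (L1pow (xv R) (yv R) s k k ∈
      Algebra.adjoin R
        ({p | ∃ i : ℤ, k - s + 1 ≤ i ∧ i ≤ k + s - 1 ∧ p = xv R i} ∪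
          {p | ∃ i : ℤ, k - s ≤ i ∧ i ≤ k + s - 2 ∧ p = yv R i})) ∧
    (L1pow (xv R) (yv R) s (k + 1) k ∈
      Algebra.adjoin R
        ({p | ∃ i : ℤ, k - s + 1 ≤ i ∧ i ≤ k + s ∧ p = xv R i} ∪
          {p | ∃ i : ℤ, k - s ≤ i ∧ i ≤ k + s - 1 ∧ p = yv R i})) ∧
    -- the explicit form of (L₁^s)_{kk}:
    (∃ F1 : MvPolynomial (ℤ ⊕ ℤ) R,
      F1 ∈ Algebra.adjoin R
        ({p | ∃ i : ℤ, k - s + 2 ≤ i ∧ i ≤ k + s - 3 ∧ p = xv R i} ∪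
          {p | ∃ i : ℤ, k - s + 1 ≤ i ∧ i ≤ k + s - 3 ∧ p = yv R i}) ∧
      L1pow (xv R) (yv R) s k k =
        -(xv R (k + s - 1) * yv R (k - 1)) *
            (∏ i ∈ Finset.Icc 1 (s - 1), vv R (k + i - 1)) +
          xv R (k + s - 2) ^ 2 * yv R (k + s - 3) * yv R (k - 1) *
            (∏ i ∈ Finset.Icc 1 (s - 2), vv R (k + i - 1)) -
          xv R (k + s - 2) *
            (yv R (k - 2) * vv R (k - 1) -
              2 * yv R (k - 1) *
                ∑ j ∈ Finset.Icc 1 (s - 2), xv R (k + j - 1) * yv R (k + j - 2)) *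
            (∏ i ∈ Finset.Icc 1 (s - 2), vv R (k + i - 1)) +
          F1 -
          xv R k * yv R (k - s) * (∏ i ∈ Finset.Icc 1 (s - 1), vv R (k - i)) +
          (if s = 2 then xv R k * yv R (k - 2) * vv R (k - 1) else 0)) ∧
    -- the explicit form of (L₁^s)_{k+1,k}:
    (∃ F2 : MvPolynomial (ℤ ⊕ ℤ) R,
      F2 ∈ Algebra.adjoin R
        ({p | ∃ i : ℤ, k - s + 2 ≤ i ∧ i ≤ k + s - 1 ∧ p = xv R i} ∪
          {p | ∃ i : ℤ, k - s + 1 ≤ i ∧ i ≤ k + s - 2 ∧ p = yv R i}) ∧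
      L1pow (xv R) (yv R) s (k + 1) k =
        -(xv R (k + s) * yv R (k - 1)) * (∏ i ∈ Finset.Icc 1 (s - 1), vv R (k + i)) -
          xv R (k + 1) * yv R (k - s) * (∏ i ∈ Finset.Icc 1 (s - 1), vv R (k - i)) +
          F2) := by
  obtain ⟨n, rfl⟩ : ∃ n, s = n + 2 := ⟨s - 2, by omega⟩
  refine ⟨?_, ?_, ?_, ?_⟩
  · -- part 1
    refine MemXY.to_adjoin ?_
    rw [L1pow_eq_Mp' (xv R) (yv R) (n+2) (k+(n:ℤ)+1) (k-(n:ℤ)-2) k k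
        (by push_cast; ring) (by push_cast; ring),
      show k+(n:ℤ)+1-1 = k+(n:ℤ) by ring, show k-(n:ℤ)-2+1 = k-(n:ℤ)-1 by ring]
    refine MemXY.add (MemXY.sub ?_ ?_) ?_
    · refine MemXY.mul (MemXY.neg (MemXY.mul (MemXY.xm ⟨by push_cast; omega, by push_cast; omega⟩)
        (MemXY.ym ⟨by push_cast; omega, by push_cast; omega⟩))) (MemXY.prod fun u hu => ?_)
      simp only [Finset.mem_Icc] at hu
      exact MemXY.v' ⟨by push_cast; omega, by push_cast; omega⟩
        ⟨by push_cast; omega, by push_cast; omega⟩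
    · refine MemXY.mul (MemXY.mul (MemXY.xm ⟨by push_cast; omega, by push_cast; omega⟩)
        (MemXY.ym ⟨by push_cast; omega, by push_cast; omega⟩)) (MemXY.prod fun u hu => ?_)
      simp only [Finset.mem_Icc] at hu
      exact MemXY.v' ⟨by push_cast; omega, by push_cast; omega⟩
        ⟨by push_cast; omega, by push_cast; omega⟩
    · refine (Mp_mem n k k (by omega)).mono (fun m hm => ?_) (fun m hm => ?_) <;>
      · rcases hm with hm | hm
        · exact ⟨by push_cast; omega, by push_cast; omega⟩
        · subst hm; exact ⟨by push_cast; omega, by push_cast; omega⟩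
  · -- part 2
    refine MemXY.to_adjoin ?_
    rw [L1pow_eq_Mp' (xv R) (yv R) (n+2) (k+(n:ℤ)+2) (k-(n:ℤ)-2) (k+1) k
        (by push_cast; ring) (by push_cast; ring),
      show k+(n:ℤ)+2-1 = k+(n:ℤ)+1 by ring, show k-(n:ℤ)-2+1 = k-(n:ℤ)-1 by ring]
    refine MemXY.add (MemXY.sub ?_ ?_) ?_
    · refine MemXY.mul (MemXY.neg (MemXY.mul (MemXY.xm ⟨by push_cast; omega, by push_cast; omega⟩)
        (MemXY.ym ⟨by push_cast; omega, by push_cast; omega⟩))) (MemXY.prod fun u hu => ?_)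
      simp only [Finset.mem_Icc] at hu
      exact MemXY.v' ⟨by push_cast; omega, by push_cast; omega⟩
        ⟨by push_cast; omega, by push_cast; omega⟩
    · refine MemXY.mul (MemXY.mul (MemXY.xm ⟨by push_cast; omega, by push_cast; omega⟩)
        (MemXY.ym ⟨by push_cast; omega, by push_cast; omega⟩)) (MemXY.prod fun u hu => ?_)
      simp only [Finset.mem_Icc] at hu
      exact MemXY.v' ⟨by push_cast; omega, by push_cast; omega⟩
        ⟨by push_cast; omega, by push_cast; omega⟩
    · refine (Mp_mem n (k+1) k (by omega)).mono (fun m hm => ?_) (fun m hm => ?_) <;>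
      · rcases hm with hm | hm
        · exact ⟨by push_cast; omega, by push_cast; omega⟩
        · subst hm; exact ⟨by push_cast; omega, by push_cast; omega⟩
  · -- part 3
    rcases n with _ | m
    · -- s = 2
      refine ⟨0, MemXY.to_adjoin MemXY.zero, ?_⟩
      rw [show (0+2 : ℕ) = 2 by norm_num]
      rw [if_pos rfl]
      rw [show (2-1 : ℕ) = 1 by norm_num, show (2-2 : ℕ) = 0 by norm_num]
      rw [Finset.Icc_self, Finset.prod_singleton, Finset.prod_singleton,
        Finset.Icc_eq_empty (by norm_num), Finset.prod_empty, Finset.sum_empty]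
      rw [show k + ((1:ℕ):ℤ) - 1 = k by push_cast; ring, show k - ((1:ℕ):ℤ) = k - 1 by push_cast; ring,
        show k + ((2:ℕ):ℤ) - 1 = k + 1 by push_cast; ring, show k + ((2:ℕ):ℤ) - 2 = k by push_cast; ring,
        show k + ((2:ℕ):ℤ) - 3 = k - 1 by push_cast; ring, show k - ((2:ℕ):ℤ) = k - 2 by push_cast; ring]
      rw [L1pow_eq_Mp' (xv R) (yv R) 2 (k+1) (k-2) k k (by push_cast; ring) (by push_cast; ring),
        show k+1-1 = k by ring, show k-2+1 = k-1 by ring,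
        Mp_two (xv R) (yv R) k k (by omega)]
      simp only [Finset.Icc_self, Finset.prod_singleton, Finset.sum_singleton, vv_def]
      ring
    · -- s = m + 3
      rw [show (m+1+2 : ℕ) = m+3 by omega]
      rw [if_neg (show ¬(m+3 = 2) by omega)]
      rw [show (m+3-1 : ℕ) = m+2 by omega, show (m+3-2 : ℕ) = m+1 by omega]
      rw [prod_shiftA (vv R) k (m+2), show k + ((m+2:ℕ):ℤ) - 1 = k+(m:ℤ)+1 by push_cast; ring]
      rw [prod_shiftA (vv R) k (m+1), show k + ((m+1:ℕ):ℤ) - 1 = k+(m:ℤ) by push_cast; ring]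
      rw [show (∑ j ∈ Finset.Icc 1 (m+1), xv R (k + (j:ℤ) - 1) * yv R (k + (j:ℤ) - 2))
          = ∑ j ∈ Finset.Icc 1 (m+1), xv R (k + (j:ℤ) - 1) * yv R (k + (j:ℤ) - 1 - 1)
        from Finset.sum_congr rfl (fun j _ => by rw [show k + (j:ℤ) - 1 - 1 = k + (j:ℤ) - 2 by ring])]
      rw [sum_shiftA (fun u => xv R u * yv R (u-1)) k (m+1),
        show k + ((m+1:ℕ):ℤ) - 1 = k+(m:ℤ) by push_cast; ring]
      rw [SingConfAux.prod_shift_neg (vv R) k (m+2),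
        show k - ((m+2:ℕ):ℤ) = k-(m:ℤ)-2 by push_cast; ring]
      rw [show k + ((m+3:ℕ):ℤ) - 1 = k+(m:ℤ)+2 by push_cast; ring,
        show k + ((m+3:ℕ):ℤ) - 2 = k+(m:ℤ)+1 by push_cast; ring,
        show k + ((m+3:ℕ):ℤ) - 3 = k+(m:ℤ) by push_cast; ring,
        show k - ((m+3:ℕ):ℤ) = k-(m:ℤ)-3 by push_cast; ring]
      simp only [vv_def]
      refine ⟨Mp (xv R) (yv R) (m+2) k (k-1)
          - yv R (k-1) * ∑ j ∈ Finset.Icc (k-1) (k+(m:ℤ)), xv R j * Mp (xv R) (yv R) (m+2) k j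
          + yv R (k-1) * xv R k * ∑ j ∈ Finset.Icc k (k+(m:ℤ)), xv R j * yv R (j-(m:ℤ)-2)
              * (∏ u ∈ Finset.Icc (j-(m:ℤ)-1) (j-1), (1 - xv R u * yv R u)), ?_, ?_⟩
      · refine MemXY.to_adjoin (MemXY.add (MemXY.sub ?_ ?_) ?_)
        · refine (Mp_mem m k (k-1) (by omega)).mono (fun u hu => ?_) (fun u hu => ?_) <;>
          · rcases hu with hu | hu
            · exact ⟨by push_cast; omega, by push_cast; omega⟩
            · subst hu; exact ⟨by push_cast; omega, by push_cast; omega⟩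
        · refine MemXY.mul (MemXY.ym ⟨by push_cast; omega, by push_cast; omega⟩)
            (MemXY.sum fun j hj => ?_)
          simp only [Finset.mem_Icc] at hj
          refine MemXY.mul (MemXY.xm ⟨by push_cast; omega, by push_cast; omega⟩) ?_
          refine (Mp_mem m k j (by omega)).mono (fun u hu => ?_) (fun u hu => ?_) <;>
          · rcases hu with hu | hu
            · exact ⟨by push_cast; omega, by push_cast; omega⟩
            · subst hu; exact ⟨by push_cast; omega, by push_cast; omega⟩
        · refine MemXY.mul (MemXY.mul (MemXY.ym ⟨by push_cast; omega, by push_cast; omega⟩)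
            (MemXY.xm ⟨by push_cast; omega, by push_cast; omega⟩)) (MemXY.sum fun j hj => ?_)
          simp only [Finset.mem_Icc] at hj
          refine MemXY.mul (MemXY.mul (MemXY.xm ⟨by push_cast; omega, by push_cast; omega⟩)
            (MemXY.ym ⟨by push_cast; omega, by push_cast; omega⟩)) (MemXY.prod fun u hu => ?_)
          simp only [Finset.mem_Icc] at hu
          exact MemXY.v' ⟨by push_cast; omega, by push_cast; omega⟩
            ⟨by push_cast; omega, by push_cast; omega⟩
      · rw [diag_id (xv R) (yv R) m k]
        ring
  · -- part 4
    rw [show (n+2-1 : ℕ) = n+1 by omega]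
    rw [SingConfAux.prod_shift (vv R) k (n+1), show k + ((n+1:ℕ):ℤ) = k+(n:ℤ)+1 by push_cast; ring]
    rw [SingConfAux.prod_shift_neg (vv R) k (n+1), show k - ((n+1:ℕ):ℤ) = k-(n:ℤ)-1 by push_cast; ring]
    rw [show (k + ((n+2:ℕ):ℤ)) = k+(n:ℤ)+2 by push_cast; ring,
      show (k - ((n+2:ℕ):ℤ)) = k-(n:ℤ)-2 by push_cast; ring]
    simp only [vv_def]
    refine ⟨Mp (xv R) (yv R) (n+2) (k+1) k, MemXY.to_adjoin ?_, ?_⟩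
    · refine (Mp_mem n (k+1) k (by omega)).mono (fun m hm => ?_) (fun m hm => ?_) <;>
      · rcases hm with hm | hm
        · exact ⟨by push_cast; omega, by push_cast; omega⟩
        · subst hm; exact ⟨by push_cast; omega, by push_cast; omega⟩
    · rw [L1pow_eq_Mp' (xv R) (yv R) (n+2) (k+(n:ℤ)+2) (k-(n:ℤ)-2) (k+1) k
          (by push_cast; ring) (by push_cast; ring),
        show k+(n:ℤ)+2-1 = k+(n:ℤ)+1 by ring, show k-(n:ℤ)-2+1 = k-(n:ℤ)-1 by ring]
end
end
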